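/- arXiv:2206.14218 — 5 statements merged into one kernel-verified Lean document; each statement's English description precedes it below -/
import Mathlib

section
/- Let V be an n-dimensional Euclidean vector space, ω a p-form, and S a trace-free symmetric endomorphism of V. Then |Sω|² ≤ (p(n-p)/n)·|S|²·|ω|², where (Sω)(X₁,…,X_p) = Σᵢ ω(X₁,…,SXᵢ,…,X_p), |S|² is the sum of squares of the eigenvalues of S, and |ω|² = Σ_{i₁,…,i_p} ω_{i₁…i_p}². -/
/-!
Diagonalize `S` in an orthonormal eigenbasis `u₁, …, uₙ` with eigenvalues `λᵢ`, `∑ λᵢ = 0`.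
Passing to this basis is orthogonal in every slot, so it preserves `|ω|²` and `|Sω|²`, and in it
the derivation action is diagonal: `(Sω)(u_I) = (λ_{I₁} + ⋯ + λ_{I_p}) ω(u_I)`. Since `ω` is
alternating, only injective `I` contribute. For the `p`-element set `A = I(Fin p)` the sums of
`λ` over `A` and over `Aᶜ` are `a` and `-a`, so Cauchy–Schwarz on both gives `a² ≤ p X` and
`a² ≤ (n - p) Y` with `X + Y = ∑ λᵢ² = |S|²`, whence `a² ≤ p(n-p)/n · |S|²`.
-/

open Finset Matrix

namespace Tensor

variable {ι m : Type*} [Fintype ι] [DecidableEq ι]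

theorem prod_update_apply (v : ι → m → ℝ) (J : ι → m) (c : ι) (w : m → ℝ) :
    ∏ k, Function.update v c w k (J k) = w (J c) * ∏ k ∈ univ.erase c, v k (J k) := by
  rw [← mul_prod_erase univ _ (mem_univ c), Function.update_self]
  congr 1
  exact prod_congr rfl fun k hk => by rw [Function.update_of_ne (ne_of_mem_erase hk)]

theorem prod_apply_update (v : ι → m → ℝ) (J : ι → m) (c : ι) (j : m) :
    ∏ k, v k (Function.update J c j k) = v c j * ∏ k ∈ univ.erase c, v k (J k) := by
  rw [← mul_prod_erase univ _ (mem_univ c), Function.update_self]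
  congr 1
  exact prod_congr rfl fun k hk => by rw [Function.update_of_ne (ne_of_mem_erase hk)]

variable [Fintype m]

theorem sum_sum_update {M : Type*} [AddCommMonoid M] (c : ι) (g : (ι → m) → m → M) :
    ∑ J, ∑ j, g (Function.update J c j) (J c) = ∑ J, ∑ j, g J j := by
  have hinv : Function.Involutive fun x : (ι → m) × m => (Function.update x.1 c x.2, x.1 c) := by
    intro x; simp
  simp only [← Fintype.sum_prod_type']
  exact Fintype.sum_equiv hinv.toPerm _ _ fun _ => rfl

/-- `eval f v = f(v₁, …, v_p)` for the multilinear form with components `f`. -/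
def eval (f : (ι → m) → ℝ) (v : ι → m → ℝ) : ℝ :=
  ∑ J, (∏ k, v k (J k)) * f J

def derivAction (S : Matrix m m ℝ) (f : (ι → m) → ℝ) (I : ι → m) : ℝ :=
  ∑ k, ∑ j, S j (I k) * f (Function.update I k j)

def IsAlternating (f : (ι → m) → ℝ) : Prop :=
  ∀ (I : ι → m) (a b : ι), a ≠ b → f (I ∘ Equiv.swap a b) = - f I

theorem eval_derivAction (S : Matrix m m ℝ) (f : (ι → m) → ℝ) (v : ι → m → ℝ) :
    eval (derivAction S f) v = ∑ c, eval f (Function.update v c (S *ᵥ v c)) := by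
  have hslot : ∀ c, ∑ J, ∑ j, (∏ k, v k (J k)) * (S j (J c) * f (Function.update J c j))
      = eval f (Function.update v c (S *ᵥ v c)) := by
    intro c
    set g : (ι → m) → m → ℝ :=
      fun J j => (∏ k, v k (Function.update J c j k)) * (S (J c) j * f J)
    rw [eval]
    calc _ = ∑ J, ∑ j, g (Function.update J c j) (J c) := by simp [g]
      _ = ∑ J, ∑ j, g J j := sum_sum_update c g
      _ = _ := by
        refine sum_congr rfl fun J _ => ?_
        rw [prod_update_apply, mulVec, dotProduct, sum_mul, sum_mul]
        simp only [g, prod_apply_update]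
        exact sum_congr rfl fun j _ => by ring
  simp only [eval, derivAction, mul_sum]
  rw [sum_comm]
  exact sum_congr rfl fun c _ => hslot c

theorem eval_update_smul (f : (ι → m) → ℝ) (v : ι → m → ℝ) (c : ι) (a : ℝ) :
    eval f (Function.update v c (a • v c)) = a * eval f v := by
  simp only [eval, mul_sum, prod_update_apply, Pi.smul_apply, smul_eq_mul]
  refine sum_congr rfl fun J _ => ?_
  rw [← mul_prod_erase univ (fun k => v k (J k)) (mem_univ c)]
  ring

theorem IsAlternating.eval_comp_swap {f : (ι → m) → ℝ} (hf : IsAlternating f) {a b : ι}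
    (hab : a ≠ b) (v : ι → m → ℝ) : eval f (v ∘ Equiv.swap a b) = - eval f v := by
  have hinv : Function.Involutive fun J : ι → m => J ∘ Equiv.swap a b := fun J => by
    ext; simp
  rw [eval, ← Equiv.sum_comp hinv.toPerm, eval, ← sum_neg_distrib]
  refine sum_congr rfl fun J _ => ?_
  simp only [Function.Involutive.coe_toPerm, Function.comp_apply, hf J a b hab]
  rw [Equiv.prod_comp (Equiv.swap a b) (fun k => v k (J k))]
  ring

theorem IsAlternating.eval_eq_zero {f : (ι → m) → ℝ} (hf : IsAlternating f) {a b : ι}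
    (hab : a ≠ b) {v : ι → m → ℝ} (hv : v a = v b) : eval f v = 0 := by
  have hswap : v ∘ Equiv.swap a b = v := by
    rw [Equiv.comp_swap_eq_update, hv, Function.update_eq_self, ← hv, Function.update_eq_self]
  have := hf.eval_comp_swap hab v
  rw [hswap] at this
  linarith

/-- The components of `f` in the basis formed by the columns of `U`. -/
def changeBasis (U : Matrix m m ℝ) (f : (ι → m) → ℝ) (I : ι → m) : ℝ :=
  eval f fun k => Uᵀ (I k)

theorem changeBasis_derivAction {S U : Matrix m m ℝ} {lam : m → ℝ}
    (hSU : ∀ i, S *ᵥ Uᵀ i = lam i • Uᵀ i) (f : (ι → m) → ℝ) (I : ι → m) :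
    changeBasis U (derivAction S f) I = (∑ k, lam (I k)) * changeBasis U f I := by
  rw [changeBasis, eval_derivAction, sum_mul]
  refine sum_congr rfl fun c _ => ?_
  rw [hSU, eval_update_smul, changeBasis]

theorem IsAlternating.changeBasis_eq_zero {f : (ι → m) → ℝ} (hf : IsAlternating f)
    (U : Matrix m m ℝ) {I : ι → m} (hI : ¬ Function.Injective I) : changeBasis U f I = 0 := by
  obtain ⟨a, b, hab, hne⟩ := Function.not_injective_iff.mp hI
  exact hf.eval_eq_zero hne (by rw [hab])

variable [DecidableEq m]

theorem sum_prod_mul_eq_ite {U : Matrix m m ℝ} (hU : U * Uᵀ = 1) (J J' : ι → m) :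
    ∑ I : ι → m, ∏ k, U (J k) (I k) * U (J' k) (I k) = if J = J' then 1 else 0 := by
  have hrow : ∀ a b, ∑ i, U a i * U b i = if a = b then 1 else 0 := by
    intro a b
    simpa [mul_apply, one_apply] using congrFun (congrFun hU a) b
  rw [← Fintype.prod_sum (fun k i => U (J k) i * U (J' k) i)]
  simp_rw [hrow]
  rw [prod_boole]
  simp [funext_iff]

theorem sum_sq_changeBasis {U : Matrix m m ℝ} (hU : U * Uᵀ = 1) (f : (ι → m) → ℝ) :
    ∑ I, changeBasis U f I ^ 2 = ∑ I, f I ^ 2 := by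
  calc ∑ I, changeBasis U f I ^ 2
      = ∑ I : ι → m, ∑ J, ∑ J', f J * f J' * ∏ k, U (J k) (I k) * U (J' k) (I k) := by
        refine sum_congr rfl fun I _ => ?_
        rw [changeBasis, eval, sq, sum_mul_sum]
        refine sum_congr rfl fun J _ => sum_congr rfl fun J' _ => ?_
        simp only [transpose_apply, prod_mul_distrib]
        ring
    _ = ∑ J, ∑ J', f J * f J' * ∑ I : ι → m, ∏ k, U (J k) (I k) * U (J' k) (I k) := by
        simp only [mul_sum]
        rw [sum_comm]
        exact sum_congr rfl fun J _ => sum_comm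
    _ = ∑ J, f J ^ 2 := by
        simp [sum_prod_mul_eq_ite hU, sq]

end Tensor

theorem sq_sum_le_of_sum_eq_zero {m : Type*} [Fintype m] [DecidableEq m] {lam : m → ℝ}
    (hlam : ∑ i, lam i = 0) (A : Finset m) :
    (∑ i ∈ A, lam i) ^ 2
      ≤ #A * (Fintype.card m - #A) / Fintype.card m * ∑ i, lam i ^ 2 := by
  rcases isEmpty_or_nonempty m with hm | hm
  · simp [Finset.eq_empty_of_isEmpty A]
  have hcompl : ∑ i ∈ Aᶜ, lam i = - ∑ i ∈ A, lam i := by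
    rw [eq_neg_iff_add_eq_zero, add_comm, sum_add_sum_compl, hlam]
  have hA := sq_sum_le_card_mul_sum_sq (s := A) (f := lam)
  have hAc := sq_sum_le_card_mul_sum_sq (s := Aᶜ) (f := lam)
  rw [hcompl, neg_sq, card_compl, Nat.cast_sub (card_le_univ A)] at hAc
  have hcard : (#A : ℝ) ≤ Fintype.card m := by exact_mod_cast card_le_univ A
  have hn : (0 : ℝ) < Fintype.card m := by exact_mod_cast Fintype.card_pos
  rw [← sum_add_sum_compl A (fun i => lam i ^ 2), div_mul_eq_mul_div, le_div_iff₀ hn]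
  -- weight the two Cauchy–Schwarz bounds by `n - #A` and `#A`
  nlinarith [mul_le_mul_of_nonneg_left hA (sub_nonneg.mpr hcard),
    mul_le_mul_of_nonneg_left hAc (Nat.cast_nonneg (α := ℝ) #A)]

theorem sq_sum_comp_le_of_injective {ι m : Type*} [Fintype ι] [Fintype m] [DecidableEq m]
    {lam : m → ℝ}
    (hlam : ∑ i, lam i = 0) {I : ι → m} (hI : Function.Injective I) :
    (∑ k, lam (I k)) ^ 2
      ≤ Fintype.card ι * (Fintype.card m - Fintype.card ι) / Fintype.card m * ∑ i, lam i ^ 2 := by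
  simpa [sum_map] using sq_sum_le_of_sum_eq_zero hlam (univ.map ⟨I, hI⟩)

theorem Matrix.sum_sq_entries_eq_of_eq_conj_diagonal {m : Type*} [Fintype m] [DecidableEq m]
    {S U : Matrix m m ℝ} {lam : m → ℝ} (hU : Uᵀ * U = 1) (hS : S = U * diagonal lam * Uᵀ) :
    ∑ i, ∑ j, S i j ^ 2 = ∑ i, lam i ^ 2 := by
  have hSS : S * Sᵀ = U * diagonal (fun i => lam i ^ 2) * Uᵀ := by
    rw [hS, transpose_mul, transpose_mul, transpose_transpose, diagonal_transpose]
    simp only [Matrix.mul_assoc]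
    rw [← Matrix.mul_assoc Uᵀ U, hU, Matrix.one_mul, ← Matrix.mul_assoc (diagonal lam),
      diagonal_mul_diagonal]
    simp only [sq]
  calc ∑ i, ∑ j, S i j ^ 2 = (S * Sᵀ).trace := by simp [trace, mul_apply, sq]
    _ = ∑ i, lam i ^ 2 := by
      rw [hSS, trace_mul_cycle, hU, one_mul, trace_diagonal]

theorem Matrix.IsHermitian.sum_sq_eigenvalues {m : Type*} [Fintype m] [DecidableEq m]
    {S : Matrix m m ℝ} (hS : S.IsHermitian) :
    ∑ i, hS.eigenvalues i ^ 2 = ∑ i, ∑ j, S i j ^ 2 := by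
  refine (sum_sq_entries_eq_of_eq_conj_diagonal (U := hS.eigenvectorUnitary) ?_ ?_).symm
  · simpa [star_eq_conjTranspose] using Unitary.coe_star_mul_self hS.eigenvectorUnitary
  · simpa [star_eq_conjTranspose] using hS.spectral_theorem

/-- For a `p`-form `ω` and a trace-free symmetric endomorphism `S`,
`|Sω|² ≤ (p(n-p)/n)·|S|²·|ω|²`. -/
theorem norm_sq_derivation_action_le
    (n p : ℕ) (S : Matrix (Fin n) (Fin n) ℝ)
    (hS : S.IsSymm) (hS0 : S.trace = 0)
    (ω : (Fin p → Fin n) → ℝ)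
    (hω : ∀ (I : Fin p → Fin n) (a b : Fin p), a ≠ b →
      ω (I ∘ Equiv.swap a b) = - ω I)
    (Sω : (Fin p → Fin n) → ℝ)
    (hSω : ∀ I, Sω I = ∑ k, ∑ j, S j (I k) * ω (Function.update I k j)) :
    (∑ I : Fin p → Fin n, (Sω I) ^ 2)
      ≤ (p : ℝ) * ((n : ℝ) - p) / n * (∑ i, ∑ j, (S i j) ^ 2)
          * (∑ I : Fin p → Fin n, (ω I) ^ 2) := by
  have hH : S.IsHermitian := isHermitian_iff_isSymm.mpr hS
  set U : Matrix (Fin n) (Fin n) ℝ := ↑hH.eigenvectorUnitary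
  set lam := hH.eigenvalues
  have hU : U * Uᵀ = 1 := by
    simpa [star_eq_conjTranspose] using Unitary.coe_mul_star_self hH.eigenvectorUnitary
  have hlam : ∑ i, lam i = 0 := by simpa [hS0] using hH.trace_eq_sum_eigenvalues.symm
  have hSU : ∀ i, S *ᵥ Uᵀ i = lam i • Uᵀ i := hH.mulVec_eigenvectorBasis
  have hSω_eq : Sω = Tensor.derivAction S ω := funext hSω
  have hpt : ∀ I, Tensor.changeBasis U Sω I ^ 2
      ≤ (p : ℝ) * ((n : ℝ) - p) / n * (∑ i, lam i ^ 2) * Tensor.changeBasis U ω I ^ 2 := by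
    intro I
    rw [hSω_eq, Tensor.changeBasis_derivAction hSU, mul_pow]
    by_cases hI : Function.Injective I
    · gcongr
      simpa using sq_sum_comp_le_of_injective hlam hI
    · simp [Tensor.IsAlternating.changeBasis_eq_zero hω U hI]
  calc ∑ I, Sω I ^ 2 = ∑ I, Tensor.changeBasis U Sω I ^ 2 :=
        (Tensor.sum_sq_changeBasis hU Sω).symm
    _ ≤ _ := sum_le_sum fun I _ => hpt I
    _ = _ := by rw [← mul_sum, Tensor.sum_sq_changeBasis hU ω, hH.sum_sq_eigenvalues]
end

section
/- Let V be an n-dimensional Euclidean vector space and ω a p-form on V. Let {S_α} be an orthonormal basis of the space S²₀(V) of trace-free symmetric (0,2)-tensors. Then Σ_α |S_α ω|² = (p(n-p)/n) · ((n+2)/2) · |ω|², independently of the choice of orthonormal basis. -/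
namespace SNSDA

noncomputable def Qf {n : ℕ} (x y : Fin n × Fin n) : ℝ :=
  ((if x.1 = y.1 then (1:ℝ) else 0) * (if x.2 = y.2 then 1 else 0)
   + (if x.1 = y.2 then (1:ℝ) else 0) * (if x.2 = y.1 then 1 else 0)) / 2
  - (if x.1 = x.2 then (1:ℝ) else 0) * (if y.1 = y.2 then 1 else 0) / n

lemma Qf_symm {n : ℕ} (x y : Fin n × Fin n) : Qf x y = Qf y x := by
  simp only [Qf, eq_comm]
  ring

lemma QQ {n : ℕ} (hn : 0 < n) (x y : Fin n × Fin n) :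
    ∑ z : Fin n × Fin n, Qf x z * Qf z y = Qf x y := by
  have hn' : (n:ℝ) ≠ 0 := Nat.cast_ne_zero.mpr hn.ne'
  obtain ⟨a, b⟩ := x; obtain ⟨c, d⟩ := y
  simp only [Qf, Fintype.sum_prod_type]
  simp only [div_eq_mul_inv, sub_mul, mul_sub, add_mul, mul_add,
    Finset.sum_sub_distrib, Finset.sum_add_distrib,
    mul_ite, ite_mul, zero_mul, mul_zero, mul_one, one_mul, mul_assoc]
  simp only [Finset.sum_ite_eq, Finset.sum_ite_eq', Finset.mem_univ, if_true,
    Finset.sum_sub_distrib, Finset.sum_add_distrib]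
  rcases eq_or_ne c d with hcd | hcd <;>
    simp only [hcd, Finset.sum_ite_eq, Finset.sum_ite_eq', Finset.mem_univ, if_true,
      Finset.sum_sub_distrib, Finset.sum_add_distrib, Finset.sum_const, Finset.card_univ,
      Fintype.card_fin, nsmul_eq_mul, if_pos rfl, ne_eq, hcd, ite_self, if_neg,
      not_false_iff] <;>
    [skip; simp only [if_neg (Ne.symm hcd), if_neg hcd, Finset.sum_const_zero]] <;>
    split_ifs <;> field_simp <;> ring

lemma QS {n : ℕ} (A : Matrix (Fin n) (Fin n) ℝ) (hA : A.IsSymm) (htr : A.trace = 0)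
    (x : Fin n × Fin n) :
    ∑ z : Fin n × Fin n, Qf x z * A z.1 z.2 = A x.1 x.2 := by
  obtain ⟨a, b⟩ := x
  have hab : A b a = A a b := by
    conv_lhs => rw [← hA]
    rfl
  have htr' : ∑ c, A c c = 0 := by
    simpa [Matrix.trace, Matrix.diag] using htr
  simp only [Qf, Fintype.sum_prod_type, div_eq_mul_inv, sub_mul, add_mul, mul_assoc,
    ite_mul, zero_mul, one_mul, Finset.sum_sub_distrib, Finset.sum_add_distrib]
  simp only [Finset.sum_ite_irrel, Finset.sum_const_zero, Finset.sum_ite_eq,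
    Finset.sum_ite_eq', Finset.mem_univ, if_true, ← Finset.mul_sum, htr', mul_zero, ite_self]
  rw [hab]
  ring

lemma traceQ {n : ℕ} (hn : 0 < n) :
    ∑ x : Fin n × Fin n, Qf x x = (n * (n+1)) / 2 - 1 := by
  have hn' : (n:ℝ) ≠ 0 := Nat.cast_ne_zero.mpr hn.ne'
  have h1 : ∀ x y : Fin n, Qf (x, y) (x, y)
      = 1/2 + (if x = y then (1:ℝ) else 0)/2 - (if x = y then (1:ℝ) else 0)/n := by
    intro x y
    rcases eq_or_ne x y with h | h
    · subst h; simp [Qf]; ring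
    · simp [Qf, if_neg h, if_neg (Ne.symm h)]
  rw [Fintype.sum_prod_type]
  simp only [h1]
  simp only [div_eq_mul_inv, ite_mul, zero_mul, one_mul, Finset.sum_sub_distrib,
    Finset.sum_add_distrib, Finset.sum_ite_eq, Finset.sum_ite_eq', Finset.mem_univ, if_true,
    Finset.sum_const, Finset.card_univ, Fintype.card_fin, nsmul_eq_mul, mul_one]
  field_simp

lemma completeness {n N : ℕ} (hn : 0 < n) (hNr : (N:ℝ) = ((n:ℝ) * (n+1)) / 2 - 1)
    (S : Fin N → Matrix (Fin n) (Fin n) ℝ)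
    (hsymm : ∀ α, (S α).IsSymm) (htr : ∀ α, (S α).trace = 0)
    (hortho : ∀ α β, (∑ i, ∑ j, S α i j * S β i j) = if α = β then (1 : ℝ) else 0) :
    ∀ x y : Fin n × Fin n, (∑ α, S α x.1 x.2 * S α y.1 y.2) = Qf x y := by
  have hOrtho : ∀ α β, (∑ z : Fin n × Fin n, S α z.1 z.2 * S β z.1 z.2)
      = if α = β then (1:ℝ) else 0 := by
    intro α β; rw [Fintype.sum_prod_type]; exact hortho α β
  set R : (Fin n × Fin n) → (Fin n × Fin n) → ℝ :=
    fun x y => Qf x y - ∑ α, S α x.1 x.2 * S α y.1 y.2 with hR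
  have hRsymm : ∀ x y, R x y = R y x := by
    intro x y
    simp only [hR, Qf_symm x y]
    congr 1
    exact Finset.sum_congr rfl fun α _ => mul_comm _ _
  have hidem : ∀ x y, (∑ z : Fin n × Fin n, R x z * R z y) = R x y := by
    intro x y
    have expand : ∀ z, R x z * R z y =
        Qf x z * Qf z y
        - (∑ β, Qf x z * (S β z.1 z.2 * S β y.1 y.2))
        - (∑ α, S α x.1 x.2 * S α z.1 z.2 * (Qf z y))
        + (∑ α, ∑ β, S α x.1 x.2 * S α z.1 z.2 * (S β z.1 z.2 * S β y.1 y.2)) := by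
      intro z
      simp only [hR]
      rw [sub_mul, mul_sub, mul_sub, Finset.mul_sum, Finset.sum_mul, Finset.sum_mul_sum]
      ring
    rw [Finset.sum_congr rfl fun z _ => expand z]
    rw [Finset.sum_add_distrib, Finset.sum_sub_distrib, Finset.sum_sub_distrib]
    have E1 : (∑ z : Fin n × Fin n, Qf x z * Qf z y) = Qf x y := QQ hn x y
    have E2 : (∑ z : Fin n × Fin n, ∑ β, Qf x z * (S β z.1 z.2 * S β y.1 y.2))
        = ∑ β, S β x.1 x.2 * S β y.1 y.2 := by
      rw [Finset.sum_comm]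
      refine Finset.sum_congr rfl fun β _ => ?_
      calc (∑ z : Fin n × Fin n, Qf x z * (S β z.1 z.2 * S β y.1 y.2))
          = (∑ z : Fin n × Fin n, Qf x z * S β z.1 z.2) * S β y.1 y.2 := by
            rw [Finset.sum_mul]; exact Finset.sum_congr rfl fun z _ => by ring
        _ = S β x.1 x.2 * S β y.1 y.2 := by rw [QS (S β) (hsymm β) (htr β)]
    have E3 : (∑ z : Fin n × Fin n, ∑ α, S α x.1 x.2 * S α z.1 z.2 * (Qf z y))
        = ∑ α, S α x.1 x.2 * S α y.1 y.2 := by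
      rw [Finset.sum_comm]
      refine Finset.sum_congr rfl fun α _ => ?_
      calc (∑ z : Fin n × Fin n, S α x.1 x.2 * S α z.1 z.2 * (Qf z y))
          = S α x.1 x.2 * (∑ z : Fin n × Fin n, Qf y z * S α z.1 z.2) := by
            rw [Finset.mul_sum]
            exact Finset.sum_congr rfl fun z _ => by rw [Qf_symm z y]; ring
        _ = S α x.1 x.2 * S α y.1 y.2 := by rw [QS (S α) (hsymm α) (htr α)]
    have E4 : (∑ z : Fin n × Fin n, ∑ α, ∑ β,
          S α x.1 x.2 * S α z.1 z.2 * (S β z.1 z.2 * S β y.1 y.2))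
        = ∑ α, S α x.1 x.2 * S α y.1 y.2 := by
      rw [Finset.sum_comm]
      refine Finset.sum_congr rfl fun α _ => ?_
      rw [Finset.sum_comm]
      calc (∑ β, ∑ z : Fin n × Fin n,
            S α x.1 x.2 * S α z.1 z.2 * (S β z.1 z.2 * S β y.1 y.2))
          = ∑ β, S α x.1 x.2 * S β y.1 y.2
              * (∑ z : Fin n × Fin n, S α z.1 z.2 * S β z.1 z.2) := by
            refine Finset.sum_congr rfl fun β _ => ?_
            rw [Finset.mul_sum]
            exact Finset.sum_congr rfl fun z _ => by ring
        _ = ∑ β, S α x.1 x.2 * S β y.1 y.2 * (if α = β then (1:ℝ) else 0) := by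
            exact Finset.sum_congr rfl fun β _ => by rw [hOrtho]
        _ = S α x.1 x.2 * S α y.1 y.2 := by
            simp [mul_ite, Finset.sum_ite_eq, Finset.sum_ite_eq']
    rw [E1, E2, E3, E4]
    simp only [hR]
    ring
  have htrace : (∑ x : Fin n × Fin n, R x x) = 0 := by
    simp only [hR]
    rw [Finset.sum_sub_distrib, traceQ hn, Finset.sum_comm]
    have : ∀ α : Fin N, (∑ z : Fin n × Fin n, S α z.1 z.2 * S α z.1 z.2) = 1 := by
      intro α; rw [hOrtho α α]; exact if_pos rfl
    rw [Finset.sum_congr rfl fun α _ => this α]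
    simp [hNr]
  have key : (∑ x : Fin n × Fin n, ∑ y : Fin n × Fin n, (R x y)^2) = 0 := by
    calc (∑ x : Fin n × Fin n, ∑ y : Fin n × Fin n, (R x y)^2)
        = ∑ x : Fin n × Fin n, ∑ y : Fin n × Fin n, R x y * R y x := by
          refine Finset.sum_congr rfl fun x _ => Finset.sum_congr rfl fun y _ => ?_
          rw [sq, hRsymm x y]
      _ = ∑ x : Fin n × Fin n, R x x := Finset.sum_congr rfl fun x _ => hidem x x
      _ = 0 := htrace
  have hzero : ∀ x y : Fin n × Fin n, R x y = 0 := by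
    intro x y
    have h1 := (Finset.sum_eq_zero_iff_of_nonneg
      (fun x _ => Finset.sum_nonneg fun y _ => sq_nonneg (R x y))).mp key x (Finset.mem_univ x)
    have h2 := (Finset.sum_eq_zero_iff_of_nonneg
      (fun y _ => sq_nonneg (R x y))).mp h1 y (Finset.mem_univ y)
    exact pow_eq_zero_iff (two_ne_zero) |>.mp h2
  intro x y
  have := hzero x y
  simp only [hR] at this
  linarith

section Aux
variable {n p : ℕ}

lemma upd_upd_swap (I : Fin p → Fin n) (a b : Fin p) :
    Function.update (Function.update I a (I b)) b (I a) = I ∘ Equiv.swap a b := by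
  funext x
  rcases eq_or_ne x b with rfl | hb
  · simp [Equiv.swap_apply_right]
  · rcases eq_or_ne x a with rfl | ha
    · simp [Function.update_of_ne hb, Equiv.swap_apply_left]
    · simp [Function.update_of_ne hb, Function.update_of_ne ha,
        Equiv.swap_apply_of_ne_of_ne ha hb]

lemma comp_swap_eq_self (I : Fin p → Fin n) (a b : Fin p) (h : I a = I b) :
    I ∘ Equiv.swap a b = I := by
  funext x
  rcases eq_or_ne x a with rfl | hxa
  · simp [Equiv.swap_apply_left, h.symm]
  · rcases eq_or_ne x b with rfl | hxb
    · simp [Equiv.swap_apply_right, h]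
    · simp [Equiv.swap_apply_of_ne_of_ne hxa hxb]

lemma omega_zero_of_rep (ω : (Fin p → Fin n) → ℝ)
    (hω : ∀ (I : Fin p → Fin n) (a b : Fin p), a ≠ b →
      ω (I ∘ Equiv.swap a b) = - ω I)
    (I : Fin p → Fin n) (a b : Fin p) (hab : a ≠ b) (h : I a = I b) : ω I = 0 := by
  have h2 := hω I a b hab
  rw [comp_swap_eq_self I a b h] at h2
  linarith

lemma reindex (k : Fin p) (g : (Fin p → Fin n) → Fin n → ℝ) :
    ∑ I : Fin p → Fin n, ∑ j, g (Function.update I k j) (I k)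
      = ∑ I : Fin p → Fin n, ∑ j, g I j := by
  rw [← Fintype.sum_prod_type', ← Fintype.sum_prod_type']
  exact Fintype.sum_equiv (Function.Involutive.toPerm
      (fun q : (Fin p → Fin n) × Fin n => (Function.update q.1 k q.2, q.1 k))
      (fun q => by simp [Function.update_idem, Function.update_eq_self]))
    _ _ (fun q => rfl)

variable (ω : (Fin p → Fin n) → ℝ)

lemma Wdiag (k : Fin p) :
    (∑ I : Fin p → Fin n, ∑ j, ω (Function.update I k j) * ω (Function.update I k j))
      = (n : ℝ) * ∑ I : Fin p → Fin n, ω I ^ 2 := by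
  have := reindex k (fun I' _ => ω I' * ω I')
  rw [this]
  rw [Finset.mul_sum]
  exact Finset.sum_congr rfl fun I _ => by
    rw [Finset.sum_const, Finset.card_univ, Fintype.card_fin, nsmul_eq_mul]; ring

lemma Woff (hω : ∀ (I : Fin p → Fin n) (a b : Fin p), a ≠ b →
      ω (I ∘ Equiv.swap a b) = - ω I) (k k' : Fin p) (hkk' : k ≠ k') :
    (∑ I : Fin p → Fin n, ∑ j, (if I k = I k' then (1:ℝ) else 0)
        * (ω (Function.update I k j) * ω (Function.update I k' j)))
      = - ∑ I : Fin p → Fin n, ω I ^ 2 := by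
  have step1 : ∀ (I : Fin p → Fin n) (j : Fin n),
      (if I k = I k' then (1:ℝ) else 0)
        * (ω (Function.update I k j) * ω (Function.update I k' j))
      = (fun I' c => (if c = I' k' then (1:ℝ) else 0)
          * (ω I' * ω (Function.update (Function.update I' k c) k' (I' k))))
          (Function.update I k j) (I k) := by
    intro I j
    simp only [Function.update_idem, Function.update_self,
      Function.update_of_ne (Ne.symm hkk'), Function.update_eq_self]
  calc (∑ I : Fin p → Fin n, ∑ j, (if I k = I k' then (1:ℝ) else 0)
        * (ω (Function.update I k j) * ω (Function.update I k' j)))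
      = ∑ I : Fin p → Fin n, ∑ j, (fun I' c => (if c = I' k' then (1:ℝ) else 0)
          * (ω I' * ω (Function.update (Function.update I' k c) k' (I' k))))
          (Function.update I k j) (I k) :=
        Finset.sum_congr rfl fun I _ => Finset.sum_congr rfl fun j _ => step1 I j
    _ = ∑ I : Fin p → Fin n, ∑ c, (if c = I k' then (1:ℝ) else 0)
          * (ω I * ω (Function.update (Function.update I k c) k' (I k))) :=
        reindex k (fun I' c => (if c = I' k' then (1:ℝ) else 0)
          * (ω I' * ω (Function.update (Function.update I' k c) k' (I' k))))
    _ = ∑ I : Fin p → Fin n, ω I * ω (Function.update (Function.update I k (I k')) k' (I k)) := by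
        refine Finset.sum_congr rfl fun I _ => ?_
        simp [ite_mul, zero_mul, one_mul, Finset.sum_ite_eq']
    _ = ∑ I : Fin p → Fin n, ω I * (- ω I) := by
        refine Finset.sum_congr rfl fun I _ => ?_
        rw [upd_upd_swap, hω I k k' hkk']
    _ = - ∑ I : Fin p → Fin n, ω I ^ 2 := by
        rw [← Finset.sum_neg_distrib]
        exact Finset.sum_congr rfl fun I _ => by ring

lemma T3_eval :
    (∑ I : Fin p → Fin n, ∑ q : Fin p × Fin n, ∑ r : Fin p × Fin n,
        ((if q.2 = I q.1 then (1:ℝ) else 0) * (if r.2 = I r.1 then 1 else 0))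
          * (ω (Function.update I q.1 q.2) * ω (Function.update I r.1 r.2)))
      = (p:ℝ)^2 * ∑ I : Fin p → Fin n, ω I ^ 2 := by
  have inner : ∀ I : Fin p → Fin n,
      (∑ q : Fin p × Fin n, (if q.2 = I q.1 then (1:ℝ) else 0)
        * ω (Function.update I q.1 q.2)) = (p:ℝ) * ω I := by
    intro I
    rw [Fintype.sum_prod_type]
    have hk : ∀ k : Fin p,
        (∑ j, (if j = I k then (1:ℝ) else 0) * ω (Function.update I k j)) = ω I := by
      intro k
      simp [ite_mul, zero_mul, one_mul, Finset.sum_ite_eq', Function.update_eq_self]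
    rw [Finset.sum_congr rfl fun k _ => hk k]
    simp [Finset.sum_const, Finset.card_univ, mul_comm]
  calc (∑ I : Fin p → Fin n, ∑ q : Fin p × Fin n, ∑ r : Fin p × Fin n,
        ((if q.2 = I q.1 then (1:ℝ) else 0) * (if r.2 = I r.1 then 1 else 0))
          * (ω (Function.update I q.1 q.2) * ω (Function.update I r.1 r.2)))
      = ∑ I : Fin p → Fin n,
          (∑ q : Fin p × Fin n, (if q.2 = I q.1 then (1:ℝ) else 0)
            * ω (Function.update I q.1 q.2))
          * (∑ r : Fin p × Fin n, (if r.2 = I r.1 then (1:ℝ) else 0)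
            * ω (Function.update I r.1 r.2)) := by
        refine Finset.sum_congr rfl fun I _ => ?_
        rw [Finset.sum_mul_sum]
        exact Finset.sum_congr rfl fun q _ => Finset.sum_congr rfl fun r _ => by ring
    _ = ∑ I : Fin p → Fin n, ((p:ℝ) * ω I) * ((p:ℝ) * ω I) := by
        exact Finset.sum_congr rfl fun I _ => by rw [inner I]
    _ = (p:ℝ)^2 * ∑ I : Fin p → Fin n, ω I ^ 2 := by
        rw [Finset.mul_sum]
        exact Finset.sum_congr rfl fun I _ => by ring

lemma T2_eval (hω : ∀ (I : Fin p → Fin n) (a b : Fin p), a ≠ b →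
      ω (I ∘ Equiv.swap a b) = - ω I) :
    (∑ I : Fin p → Fin n, ∑ q : Fin p × Fin n, ∑ r : Fin p × Fin n,
        ((if q.2 = I r.1 then (1:ℝ) else 0) * (if I q.1 = r.2 then 1 else 0))
          * (ω (Function.update I q.1 q.2) * ω (Function.update I r.1 r.2)))
      = (p:ℝ) * ∑ I : Fin p → Fin n, ω I ^ 2 := by
  have step : ∀ I : Fin p → Fin n,
      (∑ q : Fin p × Fin n, ∑ r : Fin p × Fin n,
        ((if q.2 = I r.1 then (1:ℝ) else 0) * (if I q.1 = r.2 then 1 else 0))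
          * (ω (Function.update I q.1 q.2) * ω (Function.update I r.1 r.2)))
      = ∑ k : Fin p, ∑ k' : Fin p,
          ω (Function.update I k (I k')) * ω (Function.update I k' (I k)) := by
    intro I
    rw [Fintype.sum_prod_type]
    refine Finset.sum_congr rfl fun k _ => ?_
    rw [Finset.sum_comm, Fintype.sum_prod_type]
    refine Finset.sum_congr rfl fun k' _ => ?_
    rw [Finset.sum_comm]
    simp only [ite_mul, one_mul, zero_mul, mul_ite, mul_zero,
      Finset.sum_ite_irrel, Finset.sum_const_zero, Finset.sum_ite_eq, Finset.sum_ite_eq',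
      Finset.mem_univ, if_true]
  rw [Finset.sum_congr rfl fun I _ => step I]
  have diag : ∀ I : Fin p → Fin n, ∀ k : Fin p,
      (∑ k' : Fin p, ω (Function.update I k (I k')) * ω (Function.update I k' (I k)))
        = ω I ^ 2 := by
    intro I k
    rw [Finset.sum_eq_single k]
    · rw [Function.update_eq_self]; ring
    · intro k' _ hk'
      have hrep : (Function.update I k (I k')) k = (Function.update I k (I k')) k' := by
        rw [Function.update_self]; exact (Function.update_of_ne hk' _ _).symm
      rw [omega_zero_of_rep ω hω _ k k' (fun h => hk' h.symm) hrep, zero_mul]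
    · intro h; exact absurd (Finset.mem_univ k) h
  calc (∑ I : Fin p → Fin n, ∑ k : Fin p, ∑ k' : Fin p,
        ω (Function.update I k (I k')) * ω (Function.update I k' (I k)))
      = ∑ I : Fin p → Fin n, ∑ _k : Fin p, ω I ^ 2 := by
        exact Finset.sum_congr rfl fun I _ =>
          Finset.sum_congr rfl fun k _ => diag I k
    _ = (p:ℝ) * ∑ I : Fin p → Fin n, ω I ^ 2 := by
        rw [Finset.mul_sum]
        exact Finset.sum_congr rfl fun I _ => by
          rw [Finset.sum_const, Finset.card_univ, Fintype.card_fin, nsmul_eq_mul]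

lemma T1_eval (hω : ∀ (I : Fin p → Fin n) (a b : Fin p), a ≠ b →
      ω (I ∘ Equiv.swap a b) = - ω I) :
    (∑ I : Fin p → Fin n, ∑ q : Fin p × Fin n, ∑ r : Fin p × Fin n,
        ((if q.2 = r.2 then (1:ℝ) else 0) * (if I q.1 = I r.1 then 1 else 0))
          * (ω (Function.update I q.1 q.2) * ω (Function.update I r.1 r.2)))
      = ((n:ℝ) * p - ((p:ℝ)^2 - p)) * ∑ I : Fin p → Fin n, ω I ^ 2 := by
  have step : ∀ I : Fin p → Fin n,
      (∑ q : Fin p × Fin n, ∑ r : Fin p × Fin n,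
        ((if q.2 = r.2 then (1:ℝ) else 0) * (if I q.1 = I r.1 then 1 else 0))
          * (ω (Function.update I q.1 q.2) * ω (Function.update I r.1 r.2)))
      = ∑ k : Fin p, ∑ k' : Fin p, ∑ j : Fin n,
          (if I k = I k' then (1:ℝ) else 0)
            * (ω (Function.update I k j) * ω (Function.update I k' j)) := by
    intro I
    rw [Fintype.sum_prod_type]
    refine Finset.sum_congr rfl fun k _ => ?_
    rw [Finset.sum_comm, Fintype.sum_prod_type]
    refine Finset.sum_congr rfl fun k' _ => ?_
    rw [Finset.sum_comm]
    refine Finset.sum_congr rfl fun j _ => ?_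
    simp only [ite_mul, one_mul, zero_mul, mul_ite, mul_zero,
      Finset.sum_ite_irrel, Finset.sum_const_zero, Finset.sum_ite_eq, Finset.sum_ite_eq',
      Finset.mem_univ, if_true]
  rw [Finset.sum_congr rfl fun I _ => step I]
  have hW : ∀ k k' : Fin p,
      (∑ I : Fin p → Fin n, ∑ j, (if I k = I k' then (1:ℝ) else 0)
        * (ω (Function.update I k j) * ω (Function.update I k' j)))
      = if k = k' then (n:ℝ) * ∑ I : Fin p → Fin n, ω I ^ 2
        else - ∑ I : Fin p → Fin n, ω I ^ 2 := by
    intro k k'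
    rcases eq_or_ne k k' with rfl | h
    · rw [if_pos rfl, ← Wdiag ω k]
      exact Finset.sum_congr rfl fun I _ =>
        Finset.sum_congr rfl fun j _ => by simp
    · rw [if_neg h]; exact Woff ω hω k k' h
  calc (∑ I : Fin p → Fin n, ∑ k : Fin p, ∑ k' : Fin p, ∑ j : Fin n,
          (if I k = I k' then (1:ℝ) else 0)
            * (ω (Function.update I k j) * ω (Function.update I k' j)))
      = ∑ k : Fin p, ∑ k' : Fin p, ∑ I : Fin p → Fin n, ∑ j : Fin n,
          (if I k = I k' then (1:ℝ) else 0)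
            * (ω (Function.update I k j) * ω (Function.update I k' j)) := by
        rw [Finset.sum_comm]
        exact Finset.sum_congr rfl fun k _ => Finset.sum_comm
    _ = ∑ k : Fin p, ∑ k' : Fin p,
          (if k = k' then (n:ℝ) * ∑ I : Fin p → Fin n, ω I ^ 2
            else - ∑ I : Fin p → Fin n, ω I ^ 2) :=
        Finset.sum_congr rfl fun k _ => Finset.sum_congr rfl fun k' _ => hW k k'
    _ = ((n:ℝ) * p - ((p:ℝ)^2 - p)) * ∑ I : Fin p → Fin n, ω I ^ 2 := by
        set Sw := ∑ I : Fin p → Fin n, ω I ^ 2 with hSw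
        have h1 : ∀ k : Fin p, (∑ k' : Fin p,
            if k = k' then (n:ℝ) * Sw else - Sw)
            = (p:ℝ) * (- Sw) + ((n:ℝ) * Sw - (- Sw)) := by
          intro k
          have hterm : ∀ k' : Fin p, (if k = k' then (n:ℝ) * Sw else - Sw)
              = - Sw + (if k = k' then (n:ℝ) * Sw - (- Sw) else 0) := by
            intro k'; split_ifs <;> ring
          rw [Finset.sum_congr rfl fun k' _ => hterm k', Finset.sum_add_distrib,
            Finset.sum_const, Finset.card_univ, Fintype.card_fin, nsmul_eq_mul,
            Finset.sum_ite_eq, if_pos (Finset.mem_univ k)]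
        rw [Finset.sum_congr rfl fun k _ => h1 k, Finset.sum_const, Finset.card_univ,
          Fintype.card_fin, nsmul_eq_mul]
        ring

end Aux

end SNSDA
/-- For an orthonormal basis `{S_α}` of the trace-free symmetric (0,2)-tensors
(of dimension `N = (n-1)(n+2)/2`) and a `p`-form `ω`,
`∑_α |S_α ω|² = (p(n-p)/n)·((n+2)/2)·|ω|²`. -/
theorem sum_norm_sq_derivation_action
    (n p N : ℕ) (hN : N = (n - 1) * (n + 2) / 2)
    (S : Fin N → Matrix (Fin n) (Fin n) ℝ)
    (hsymm : ∀ α, (S α).IsSymm) (htr : ∀ α, (S α).trace = 0)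
    (hortho : ∀ α β, (∑ i, ∑ j, S α i j * S β i j) = if α = β then (1 : ℝ) else 0)
    (ω : (Fin p → Fin n) → ℝ)
    (hω : ∀ (I : Fin p → Fin n) (a b : Fin p), a ≠ b →
      ω (I ∘ Equiv.swap a b) = - ω I) :
    (∑ α, ∑ I : Fin p → Fin n,
        (∑ k, ∑ j, S α j (I k) * ω (Function.update I k j)) ^ 2)
      = (p : ℝ) * ((n : ℝ) - p) / n * (((n : ℝ) + 2) / 2)
          * (∑ I : Fin p → Fin n, (ω I) ^ 2) := by
  rcases Nat.eq_zero_or_pos n with hn | hn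
  · subst hn
    rcases Nat.eq_zero_or_pos p with hp | hp
    · subst hp; simp
    · haveI : IsEmpty (Fin p → Fin 0) := ⟨fun I => (I ⟨0, hp⟩).elim0⟩
      simp
  · have hn' : (n:ℝ) ≠ 0 := Nat.cast_ne_zero.mpr hn.ne'
    have h2 : 2 ∣ (n - 1) * (n + 2) := by
      rcases Nat.even_or_odd n with ⟨m, hm⟩ | ⟨m, hm⟩
      · exact Dvd.dvd.mul_left ⟨m + 1, by omega⟩ _
      · exact Dvd.dvd.mul_right ⟨m, by omega⟩ _
    have hNN : 2 * N = (n - 1) * (n + 2) := by rw [hN, Nat.mul_div_cancel' h2]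
    have hNr : (N:ℝ) = ((n:ℝ) * ((n:ℝ) + 1)) / 2 - 1 := by
      have h3 : ((2 * N : ℕ) : ℝ) = (((n - 1) * (n + 2) : ℕ) : ℝ) := by
        exact_mod_cast congrArg (fun m : ℕ => (m : ℝ)) hNN
      have h1n : (1:ℕ) ≤ n := hn
      push_cast [Nat.cast_sub h1n] at h3
      linear_combination h3 / 2
    have compl := SNSDA.completeness hn hNr S hsymm htr hortho
    calc (∑ α, ∑ I : Fin p → Fin n,
          (∑ k, ∑ j, S α j (I k) * ω (Function.update I k j)) ^ 2)
        = ∑ α, ∑ I : Fin p → Fin n,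
            (∑ q : Fin p × Fin n, S α q.2 (I q.1) * ω (Function.update I q.1 q.2)) ^ 2 := by
          refine Finset.sum_congr rfl fun α _ => Finset.sum_congr rfl fun I _ =>
            congrArg (· ^ 2) ?_
          exact (Fintype.sum_prod_type (f := fun q : Fin p × Fin n =>
            S α q.2 (I q.1) * ω (Function.update I q.1 q.2))).symm
      _ = ∑ α, ∑ I : Fin p → Fin n, ∑ q : Fin p × Fin n, ∑ r : Fin p × Fin n,
            (S α q.2 (I q.1) * S α r.2 (I r.1))
              * (ω (Function.update I q.1 q.2) * ω (Function.update I r.1 r.2)) := by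
          refine Finset.sum_congr rfl fun α _ => Finset.sum_congr rfl fun I _ => ?_
          rw [sq, Finset.sum_mul_sum]
          exact Finset.sum_congr rfl fun q _ => Finset.sum_congr rfl fun r _ => by ring
      _ = ∑ I : Fin p → Fin n, ∑ q : Fin p × Fin n, ∑ r : Fin p × Fin n,
            (∑ α, S α q.2 (I q.1) * S α r.2 (I r.1))
              * (ω (Function.update I q.1 q.2) * ω (Function.update I r.1 r.2)) := by
          rw [Finset.sum_comm]
          refine Finset.sum_congr rfl fun I _ => ?_
          rw [Finset.sum_comm]
          refine Finset.sum_congr rfl fun q _ => ?_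
          rw [Finset.sum_comm]
          refine Finset.sum_congr rfl fun r _ => ?_
          rw [Finset.sum_mul]
      _ = ∑ I : Fin p → Fin n, ∑ q : Fin p × Fin n, ∑ r : Fin p × Fin n,
            SNSDA.Qf (q.2, I q.1) (r.2, I r.1)
              * (ω (Function.update I q.1 q.2) * ω (Function.update I r.1 r.2)) := by
          refine Finset.sum_congr rfl fun I _ => Finset.sum_congr rfl fun q _ =>
            Finset.sum_congr rfl fun r _ => ?_
          rw [show (∑ α, S α q.2 (I q.1) * S α r.2 (I r.1))
              = SNSDA.Qf (q.2, I q.1) (r.2, I r.1) from compl (q.2, I q.1) (r.2, I r.1)]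
      _ = ∑ I : Fin p → Fin n, ∑ q : Fin p × Fin n, ∑ r : Fin p × Fin n,
            ((1/2) * (((if q.2 = r.2 then (1:ℝ) else 0) * (if I q.1 = I r.1 then 1 else 0))
                * (ω (Function.update I q.1 q.2) * ω (Function.update I r.1 r.2)))
             + (1/2) * (((if q.2 = I r.1 then (1:ℝ) else 0) * (if I q.1 = r.2 then 1 else 0))
                * (ω (Function.update I q.1 q.2) * ω (Function.update I r.1 r.2)))
             - (1/(n:ℝ)) * (((if q.2 = I q.1 then (1:ℝ) else 0) * (if r.2 = I r.1 then 1 else 0))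
                * (ω (Function.update I q.1 q.2) * ω (Function.update I r.1 r.2)))) := by
          refine Finset.sum_congr rfl fun I _ => Finset.sum_congr rfl fun q _ =>
            Finset.sum_congr rfl fun r _ => ?_
          simp only [SNSDA.Qf]
          ring
      _ = (1/2) * (∑ I : Fin p → Fin n, ∑ q : Fin p × Fin n, ∑ r : Fin p × Fin n,
              ((if q.2 = r.2 then (1:ℝ) else 0) * (if I q.1 = I r.1 then 1 else 0))
                * (ω (Function.update I q.1 q.2) * ω (Function.update I r.1 r.2)))
          + (1/2) * (∑ I : Fin p → Fin n, ∑ q : Fin p × Fin n, ∑ r : Fin p × Fin n,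
              ((if q.2 = I r.1 then (1:ℝ) else 0) * (if I q.1 = r.2 then 1 else 0))
                * (ω (Function.update I q.1 q.2) * ω (Function.update I r.1 r.2)))
          - (1/(n:ℝ)) * (∑ I : Fin p → Fin n, ∑ q : Fin p × Fin n, ∑ r : Fin p × Fin n,
              ((if q.2 = I q.1 then (1:ℝ) else 0) * (if r.2 = I r.1 then 1 else 0))
                * (ω (Function.update I q.1 q.2) * ω (Function.update I r.1 r.2))) := by
          simp only [Finset.sum_add_distrib, Finset.sum_sub_distrib, ← Finset.mul_sum]
      _ = (p : ℝ) * ((n : ℝ) - p) / n * (((n : ℝ) + 2) / 2)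
          * (∑ I : Fin p → Fin n, (ω I) ^ 2) := by
          rw [SNSDA.T1_eval ω hω, SNSDA.T2_eval ω hω, SNSDA.T3_eval ω]
          field_simp
          ring
end

section
/- Let λ₁ ≤ … ≤ λ_N be real numbers and let k' < k be real numbers ≥ 1 with ⌊k⌋ ≤ N-1. If λ₁ + … + λ_{⌊k'⌋} + (k'-⌊k'⌋)λ_{⌊k'⌋+1} ≥ 0, then either λ₁ + … + λ_{⌊k⌋} + (k-⌊k⌋)λ_{⌊k⌋+1} > 0, or λ₁ ≥ 0 (i.e., all λᵢ are nonnegative). -/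
/-!
The function `x ↦ kSum λ x` is piecewise linear with slope `λ_{⌊x⌋}` on `[⌊x⌋, ⌊x⌋ + 1)`, so it
is convex when `λ` is monotone and lies above its supporting line at `k'`:
`kSum λ k ≥ kSum λ k' + (k - k') λ_{⌊k'⌋}`. If the tuple is `k'`-nonnegative but not `k`-positive,
this forces `λ_{⌊k'⌋} ≤ 0`, hence every term of `kSum λ k'` except `λ₁` is nonpositive, and
`0 ≤ kSum λ k' ≤ λ₁`.
-/

open Finset

/-- The paper's `λ₁ + … + λ_{⌊k⌋} + (k - ⌊k⌋) λ_{⌊k⌋+1}`, with indices starting at `0`. -/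
noncomputable def kSum (f : ℕ → ℝ) (k : ℝ) : ℝ :=
  ∑ j ∈ range ⌊k⌋₊, f j + (k - ⌊k⌋₊) * f ⌊k⌋₊

section Monotone

variable {f : ℕ → ℝ} {x y : ℝ}

theorem kSum_add_mul_le (hf : Monotone f) (hx : 0 ≤ x) (hxy : x ≤ y) :
    kSum f x + (y - x) * f ⌊x⌋₊ ≤ kSum f y := by
  have hm : ⌊x⌋₊ ≤ ⌊y⌋₊ := Nat.floor_mono hxy
  have hsplit := sum_range_add_sum_Ico f hm
  have hIco : ((⌊y⌋₊ : ℝ) - ⌊x⌋₊) * f ⌊x⌋₊ ≤ ∑ j ∈ Ico ⌊x⌋₊ ⌊y⌋₊, f j := by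
    have := card_nsmul_le_sum (Ico ⌊x⌋₊ ⌊y⌋₊) f (f ⌊x⌋₊) fun j hj => hf (mem_Ico.1 hj).1
    rwa [Nat.card_Ico, nsmul_eq_mul, Nat.cast_sub hm] at this
  have htail : (y - ⌊y⌋₊) * f ⌊x⌋₊ ≤ (y - ⌊y⌋₊) * f ⌊y⌋₊ :=
    mul_le_mul_of_nonneg_left (hf hm) (sub_nonneg.2 (Nat.floor_le (hx.trans hxy)))
  unfold kSum
  linarith

theorem kSum_le_apply_zero (hf : Monotone f) (hx : 1 ≤ x) (hfx : f ⌊x⌋₊ ≤ 0) :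
    kSum f x ≤ f 0 := by
  have hm : 1 ≤ ⌊x⌋₊ := Nat.le_floor (by exact_mod_cast hx)
  have hsum : ∑ j ∈ Ico 1 ⌊x⌋₊, f j ≤ 0 :=
    sum_nonpos fun j hj => (hf (mem_Ico.1 hj).2.le).trans hfx
  have hfrac : (x - ⌊x⌋₊) * f ⌊x⌋₊ ≤ 0 :=
    mul_nonpos_of_nonneg_of_nonpos (sub_nonneg.2 (Nat.floor_le (by linarith))) hfx
  rw [kSum, sum_range_eq_add_Ico f hm]
  linarith

theorem apply_zero_nonneg_of_kSum (hf : Monotone f) (hx : 1 ≤ x) (hxy : x < y)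
    (hSx : 0 ≤ kSum f x) (hSy : kSum f y ≤ 0) : 0 ≤ f 0 := by
  have hfx : f ⌊x⌋₊ ≤ 0 := by
    have := kSum_add_mul_le hf (by linarith) hxy.le
    exact nonpos_of_mul_nonpos_right (by linarith) (sub_pos.2 hxy)
  exact hSx.trans (kSum_le_apply_zero hf hx hfx)

end Monotone

theorem Fin.exists_monotone_extend {α : Type*} [Preorder α] {N : ℕ} {lam : Fin N → α}
    (hmono : Monotone lam) (hN : 0 < N) :
    ∃ g : ℕ → α, Monotone g ∧ ∀ i : Fin N, g i = lam i := by
  refine ⟨fun j => lam ⟨min j (N - 1), by omega⟩, fun a b hab => hmono ?_, fun i => ?_⟩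
  · simp only [Fin.mk_le_mk]
    omega
  · exact congrArg lam (Fin.ext (by simp only; omega))

theorem sum_filter_val_lt_eq_sum_range {M : Type*} [AddCommMonoid M] (g : ℕ → M) {n N : ℕ}
    (hn : n ≤ N) : ∑ i ∈ univ.filter (fun i : Fin N => (i : ℕ) < n), g i = ∑ j ∈ range n, g j := by
  refine (sum_map _ Fin.valEmbedding g).symm.trans (congrArg (Finset.sum · g) ?_)
  ext j
  simp only [mem_map, mem_filter, mem_univ, true_and, Fin.valEmbedding_apply, mem_range]
  exact ⟨fun ⟨i, hi, hij⟩ => hij ▸ hi, fun hj => ⟨⟨j, by omega⟩, hj, rfl⟩⟩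

theorem sum_filter_add_mul_eq_kSum {N : ℕ} {lam : Fin N → ℝ} {g : ℕ → ℝ}
    (hg : ∀ i : Fin N, g i = lam i) (x : ℝ) (h : Int.toNat ⌊x⌋ < N) :
    (∑ i ∈ univ.filter (fun i : Fin N => (i : ℕ) < Int.toNat ⌊x⌋), lam i)
      + (x - (Int.toNat ⌊x⌋ : ℝ)) * lam ⟨Int.toNat ⌊x⌋, h⟩ = kSum g x := by
  simp only [← hg]
  rw [sum_filter_val_lt_eq_sum_range g h.le, kSum, Int.floor_toNat]

open Finset in
/-- If `k' < k` and the tuple `λ₁ ≤ … ≤ λ_N` is `k'`-nonnegative, then either it is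
`k`-positive or all `λᵢ` are nonnegative. -/
theorem k_pos_or_nonneg_of_k'_nonneg
    (N : ℕ) (lam : Fin N → ℝ) (hmono : Monotone lam)
    (k k' : ℝ) (hk' : 1 ≤ k') (hk'k : k' < k)
    (h1 : Int.toNat ⌊k'⌋ < N) (h2 : Int.toNat ⌊k⌋ < N)
    (hnonneg : 0 ≤ (∑ i ∈ univ.filter (fun i : Fin N => (i : ℕ) < Int.toNat ⌊k'⌋), lam i)
        + (k' - (Int.toNat ⌊k'⌋ : ℝ)) * lam ⟨Int.toNat ⌊k'⌋, h1⟩) :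
    (0 < (∑ i ∈ univ.filter (fun i : Fin N => (i : ℕ) < Int.toNat ⌊k⌋), lam i)
        + (k - (Int.toNat ⌊k⌋ : ℝ)) * lam ⟨Int.toNat ⌊k⌋, h2⟩)
    ∨ (∀ i, 0 ≤ lam i) := by
  obtain ⟨g, hg, hgl⟩ := Fin.exists_monotone_extend hmono (by omega)
  rw [sum_filter_add_mul_eq_kSum hgl] at hnonneg ⊢
  refine (lt_or_ge 0 (kSum g k)).imp_right fun hk i => ?_
  rw [← hgl]
  exact (apply_zero_nonneg_of_kSum hg hk' hk'k hnonneg hk).trans (hg (Nat.zero_le i))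
end

section
/- Let R be an algebraic curvature tensor on an n-dimensional Euclidean vector space with curvature operator of the second kind 𝓡 having eigenvalues λ₁ ≤ … ≤ λ_N, N = (n-1)(n+2)/2. For any orthonormal basis e₁,…,eₙ and any 2 ≤ p ≤ n, the partial Ricci sum satisfies Σ_{i=1}^p Ric(eᵢ,eᵢ) ≥ 2(λ₁+…+λ_m) + (p(n-1)-2m)λ_{m+1}, where m = ⌊p(n-1)/2⌋. In particular, if 𝓡 is (p(n-1)/2)-nonnegative then Σ_{i=1}^p Ric(eᵢ,eᵢ) ≥ 0. -/
open Finset Matrix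

private lemma sum_double_ite {n : ℕ} (u v : Fin n) (g : Fin n → Fin n → ℝ) :
    (∑ x : Fin n, ∑ y : Fin n, (if x = u ∧ y = v then (1:ℝ) else 0) * g x y) = g u v := by
  simp [ite_and, ite_mul, Finset.sum_ite_eq']

private lemma sum_double_ite' {n : ℕ} (u v : Fin n) (g : Fin n → Fin n → ℝ) :
    (∑ x : Fin n, ∑ y : Fin n, g x y * (if x = u ∧ y = v then (1:ℝ) else 0)) = g u v := by
  simp [ite_and, mul_ite, Finset.sum_ite_eq', mul_comm]

private lemma card_filter_lt {n : ℕ} (p : ℕ) (h : p ≤ n) :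
    ((univ : Finset (Fin n)).filter (fun i : Fin n => (i:ℕ) < p)).card = p := by
  have : (univ : Finset (Fin n)).filter (fun i : Fin n => (i:ℕ) < p)
      = (univ : Finset (Fin p)).map (Fin.castLEEmb h) := by
    ext x
    simp only [mem_filter, mem_univ, true_and, mem_map, Fin.castLEEmb_apply]
    constructor
    · intro hx; exact ⟨⟨x.val, hx⟩, rfl⟩
    · rintro ⟨y, rfl⟩; exact y.isLt
  rw [this, Finset.card_map, Finset.card_univ, Fintype.card_fin]

private abbrev Idx (n : ℕ) := (Σ i : Fin n, Fin i.val) ⊕ Fin (n - 1)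

private def Bf {n : ℕ} : Idx n → Fin n → Fin n → ℝ
  | .inl ⟨i, j⟩ => fun a b =>
      (if a = i ∧ (b:ℕ) = (j:ℕ) then 1 else 0) + (if (a:ℕ) = (j:ℕ) ∧ b = i then 1 else 0)
  | .inr k => fun a b =>
      if a = b then (if (a:ℕ) = 0 then 1 else if (a:ℕ) = (k:ℕ) + 1 then -1 else 0) else 0

private def Cf {n N : ℕ} (S : Fin N → Matrix (Fin n) (Fin n) ℝ) : Fin N → Idx n → ℝ
  | α, .inl ⟨i, j⟩ => S α ⟨(j:ℕ), j.isLt.trans i.isLt⟩ i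
  | α, .inr k => - S α ⟨(k:ℕ)+1, by have := k.isLt; omega⟩ ⟨(k:ℕ)+1, by have := k.isLt; omega⟩

private lemma decomp {n N : ℕ} (hn : 2 ≤ n)
    (S : Fin N → Matrix (Fin n) (Fin n) ℝ)
    (hsymm : ∀ α, (S α).IsSymm) (htr : ∀ α, (S α).trace = 0)
    (α : Fin N) (x y : Fin n) :
    S α x y = ∑ β : Idx n, Cf S α β * Bf β x y := by
  rw [Fintype.sum_sum_type]
  rw [← Finset.univ_sigma_univ, Finset.sum_sigma]
  -- now : S α x y = (∑ i, ∑ j : Fin i.val, Cf S α (.inl ⟨i,j⟩) * Bf (.inl ⟨i,j⟩) x y)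
  --                 + ∑ k, Cf S α (.inr k) * Bf (.inr k) x y
  have expand : ∀ (i : Fin n) (j : Fin i.val),
      Cf S α (.inl ⟨i,j⟩) * Bf (.inl ⟨i,j⟩) x y
        = S α ⟨(j:ℕ), j.isLt.trans i.isLt⟩ i * (if x = i ∧ (y:ℕ) = (j:ℕ) then 1 else 0)
          + S α ⟨(j:ℕ), j.isLt.trans i.isLt⟩ i * (if (x:ℕ) = (j:ℕ) ∧ y = i then 1 else 0) := by
    intro i j; simp [Cf, Bf, mul_add]
  simp_rw [expand, Finset.sum_add_distrib]
  -- Sum A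
  have hA : (∑ i : Fin n, ∑ j : Fin i.val,
      S α ⟨(j:ℕ), j.isLt.trans i.isLt⟩ i * (if x = i ∧ (y:ℕ) = (j:ℕ) then 1 else 0))
      = if (y:ℕ) < (x:ℕ) then S α y x else 0 := by
    by_cases hyx : (y:ℕ) < (x:ℕ)
    · rw [if_pos hyx, Finset.sum_eq_single x]
      · rw [Finset.sum_eq_single (⟨(y:ℕ), hyx⟩ : Fin x.val)]
        · simp
        · intro j _ hj
          rw [if_neg, mul_zero]
          rintro ⟨-, hy⟩
          exact hj (by ext; simp [hy.symm])
        · simp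
      · intro i _ hi
        exact Finset.sum_eq_zero fun j _ => by
          rw [if_neg, mul_zero]; rintro ⟨h1, -⟩; exact hi h1.symm
      · simp
    · rw [if_neg hyx]
      refine Finset.sum_eq_zero fun i _ => Finset.sum_eq_zero fun j _ => ?_
      rw [if_neg, mul_zero]
      rintro ⟨rfl, h2⟩
      exact hyx (h2 ▸ j.isLt)
  -- Sum B
  have hB : (∑ i : Fin n, ∑ j : Fin i.val,
      S α ⟨(j:ℕ), j.isLt.trans i.isLt⟩ i * (if (x:ℕ) = (j:ℕ) ∧ y = i then 1 else 0))
      = if (x:ℕ) < (y:ℕ) then S α x y else 0 := by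
    by_cases hxy : (x:ℕ) < (y:ℕ)
    · rw [if_pos hxy, Finset.sum_eq_single y]
      · rw [Finset.sum_eq_single (⟨(x:ℕ), hxy⟩ : Fin y.val)]
        · simp
        · intro j _ hj
          rw [if_neg, mul_zero]
          rintro ⟨hx1, -⟩
          exact hj (by ext; simp [hx1.symm])
        · simp
      · intro i _ hi
        exact Finset.sum_eq_zero fun j _ => by
          rw [if_neg, mul_zero]; rintro ⟨-, h2⟩; exact hi h2.symm
      · simp
    · rw [if_neg hxy]
      refine Finset.sum_eq_zero fun i _ => Finset.sum_eq_zero fun j _ => ?_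
      rw [if_neg, mul_zero]
      rintro ⟨h1, rfl⟩
      exact hxy (h1 ▸ j.isLt)
  rw [hA, hB]
  -- Diagonal sum
  have hD : (∑ k : Fin (n-1), Cf S α (.inr k) * Bf (.inr k) x y)
      = if x = y then S α x x else 0 := by
    by_cases hxy : x = y
    · subst hxy
      rw [if_pos rfl]
      by_cases hx0 : (x:ℕ) = 0
      · have hterm : ∀ k : Fin (n-1), Cf S α (.inr k) * Bf (.inr k) x x
            = - S α ⟨(k:ℕ)+1, by have := k.isLt; omega⟩ ⟨(k:ℕ)+1, by have := k.isLt; omega⟩ := by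
          intro k; simp [Cf, Bf, hx0]
        rw [Finset.sum_congr rfl fun k _ => hterm k]
        have ht := htr α
        rw [Matrix.trace] at ht
        have hemb : Function.Injective
            (fun k : Fin (n-1) => (⟨(k:ℕ)+1, by have := k.isLt; omega⟩ : Fin n)) := by
          intro a b hab
          have h1 : (a:ℕ)+1 = (b:ℕ)+1 := congrArg Fin.val hab
          exact Fin.ext (by omega)
        have hnot : x ∉ Finset.map ⟨_, hemb⟩ (univ : Finset (Fin (n-1))) := by
          simp only [Finset.mem_map, Finset.mem_univ, true_and, Function.Embedding.coeFn_mk,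
            not_exists]
          intro k hkk
          have hkk' : (k:ℕ)+1 = (x:ℕ) := congrArg Fin.val hkk
          omega
        have hsets : (univ : Finset (Fin n)) = insert x (Finset.map ⟨_, hemb⟩ univ) := by
          ext i
          simp only [Finset.mem_univ, Finset.mem_insert, Finset.mem_map, true_and,
            Function.Embedding.coeFn_mk, true_iff]
          rcases Nat.eq_zero_or_pos (i:ℕ) with h0 | hpos
          · exact Or.inl (Fin.ext (by omega))
          · exact Or.inr ⟨⟨(i:ℕ)-1, by have := i.isLt; omega⟩,
              Fin.ext (show (i:ℕ)-1+1 = (i:ℕ) by omega)⟩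
        have hsplit : (∑ i : Fin n, S α i i)
            = S α x x + ∑ k : Fin (n-1),
                S α ⟨(k:ℕ)+1, by have := k.isLt; omega⟩ ⟨(k:ℕ)+1, by have := k.isLt; omega⟩ := by
          conv_lhs => rw [hsets]
          rw [Finset.sum_insert hnot, Finset.sum_map]
          rfl
        have hdiag : ∀ i : Fin n, (S α).diag i = S α i i := fun _ => rfl
        simp only [hdiag] at ht
        rw [Finset.sum_neg_distrib]
        linarith [hsplit, ht]
      · -- x.val = c+1
        have hxpos : 0 < (x:ℕ) := Nat.pos_of_ne_zero hx0
        have hk0lt : (x:ℕ) - 1 < n - 1 := by have := x.isLt; omega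
        rw [Finset.sum_eq_single (⟨(x:ℕ)-1, hk0lt⟩ : Fin (n-1))]
        · simp only [Cf, Bf, if_pos rfl, if_neg hx0]
          rw [if_pos (show (x:ℕ) = ((⟨(x:ℕ)-1, hk0lt⟩ : Fin (n-1)):ℕ) + 1 by simp; omega)]
          have hxeq : (⟨((⟨(x:ℕ)-1, hk0lt⟩ : Fin (n-1)):ℕ)+1,
              by have := hk0lt; omega⟩ : Fin n) = x := Fin.ext (by simp; omega)
          rw [hxeq]
          simp
        · intro k _ hk
          have hkv : (k:ℕ) ≠ (x:ℕ)-1 :=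
            fun h => hk (Fin.ext (show (k:ℕ) = (x:ℕ)-1 from h))
          have hne2 : ¬((x:ℕ) = (k:ℕ)+1) := by omega
          simp [Cf, Bf, hx0, hne2]
        · simp
    · rw [if_neg hxy]
      exact Finset.sum_eq_zero fun k _ => by simp [Cf, Bf, if_neg hxy]
  rw [hD]
  -- combine cases
  rcases lt_trichotomy (x:ℕ) (y:ℕ) with h | h | h
  · have hne : x ≠ y := Fin.ne_of_val_ne (by omega)
    rw [if_neg (by omega), if_pos h, if_neg hne]
    ring
  · have hxy : x = y := Fin.ext h
    subst hxy
    simp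
  · have hne : x ≠ y := Fin.ne_of_val_ne (by omega)
    rw [if_pos h, if_neg (by omega), if_neg hne]
    have := (hsymm α).apply x y
    -- this : S α y x = S α x y
    rw [show S α y x = S α x y from this]
    ring

private lemma idx_card {n N : ℕ} (hn : 2 ≤ n) (hN : N = (n - 1) * (n + 2) / 2) :
    Fintype.card (Idx n) = N := by
  have h1 : Fintype.card (Idx n) = (∑ i : Fin n, (i:ℕ)) + (n-1) := by
    simp
  have h2 : (∑ i : Fin n, (i:ℕ)) = ∑ i ∈ Finset.range n, i := Fin.sum_univ_eq_sum_range (fun i => i) n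
  have h3 : (∑ i ∈ Finset.range n, i) * 2 = n * (n-1) := Finset.sum_range_id_mul_two n
  obtain ⟨m, rfl⟩ : ∃ m, n = m + 2 := ⟨n - 2, by omega⟩
  set t := ∑ i ∈ Finset.range (m+2), i with ht
  have h5 : (m+2-1) * (m+2+2) = 2*(t + (m+2-1)) := by
    have h3' : t * 2 = (m+2) * (m+1) := by rw [h3]; congr 1
    nlinarith [h3']
  rw [h5] at hN
  omega

private lemma key_expansion {n N : ℕ} (hn : 2 ≤ n) (hN : N = (n - 1) * (n + 2) / 2)
    (S : Fin N → Matrix (Fin n) (Fin n) ℝ)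
    (hsymm : ∀ α, (S α).IsSymm) (htr : ∀ α, (S α).trace = 0)
    (hortho : ∀ α β, (∑ i, ∑ j, S α i j * S β i j) = if α = β then (1 : ℝ) else 0)
    {a b : Fin n} (hab : a ≠ b) (k l : Fin n) :
    (if k = a ∧ l = b then (1:ℝ) else 0) + (if k = b ∧ l = a then 1 else 0)
      = ∑ α, 2 * S α a b * S α k l := by
  suffices main : ∀ a b : Fin n, (b:ℕ) < (a:ℕ) → ∀ k l : Fin n,
      (if k = a ∧ l = b then (1:ℝ) else 0) + (if k = b ∧ l = a then 1 else 0)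
        = ∑ α, 2 * S α a b * S α k l by
    rcases lt_or_gt_of_ne (fun h : (a:ℕ) = (b:ℕ) => hab (Fin.ext h)) with h | h
    · rw [add_comm, main b a h k l]
      exact Finset.sum_congr rfl fun α _ => by rw [(hsymm α).apply a b]
    · exact main a b h k l
  clear hab k l
  intro a b hba k l
  classical
  have e : Fin N ≃ Idx n := (Fintype.equivFinOfCardEq (idx_card hn hN)).symm
  set Cm : Matrix (Fin N) (Idx n) ℝ := Matrix.of (fun α β => Cf S α β) with hCm
  set Gm : Matrix (Idx n) (Idx n) ℝ :=
    Matrix.of (fun β γ => ∑ x, ∑ y, Bf β x y * Bf γ x y) with hGm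
  -- orthonormality in coefficient form
  have hOrth2 : ∀ α α', (∑ β : Idx n, ∑ γ : Idx n,
      (Cf S α β * Cf S α' γ) * (∑ x, ∑ y, Bf β x y * Bf γ x y))
      = if α = α' then (1:ℝ) else 0 := by
    intro α α'
    have step1 : (∑ β : Idx n, ∑ γ : Idx n,
        (Cf S α β * Cf S α' γ) * (∑ x, ∑ y, Bf β x y * Bf γ x y))
        = ∑ p : Idx n × Idx n, ∑ q : Fin n × Fin n,
            (Cf S α p.1 * Bf p.1 q.1 q.2) * (Cf S α' p.2 * Bf p.2 q.1 q.2) := by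
      rw [Fintype.sum_prod_type]
      refine Finset.sum_congr rfl fun β _ => Finset.sum_congr rfl fun γ _ => ?_
      rw [Fintype.sum_prod_type]
      rw [Finset.mul_sum]
      refine Finset.sum_congr rfl fun x _ => ?_
      rw [Finset.mul_sum]
      refine Finset.sum_congr rfl fun y _ => ?_
      ring
    have step2 : (∑ q : Fin n × Fin n,
        (∑ β : Idx n, Cf S α β * Bf β q.1 q.2) * (∑ γ : Idx n, Cf S α' γ * Bf γ q.1 q.2))
        = ∑ q : Fin n × Fin n, S α q.1 q.2 * S α' q.1 q.2 := by
      refine Finset.sum_congr rfl fun q _ => ?_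
      rw [← decomp hn S hsymm htr α q.1 q.2, ← decomp hn S hsymm htr α' q.1 q.2]
    rw [step1, Finset.sum_comm]
    calc ∑ q : Fin n × Fin n, ∑ p : Idx n × Idx n,
            (Cf S α p.1 * Bf p.1 q.1 q.2) * (Cf S α' p.2 * Bf p.2 q.1 q.2)
        = ∑ q : Fin n × Fin n,
            (∑ β : Idx n, Cf S α β * Bf β q.1 q.2) * (∑ γ : Idx n, Cf S α' γ * Bf γ q.1 q.2) := by
          refine Finset.sum_congr rfl fun q _ => ?_
          rw [Finset.sum_mul_sum, Fintype.sum_prod_type]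
      _ = ∑ q : Fin n × Fin n, S α q.1 q.2 * S α' q.1 q.2 := step2
      _ = ∑ x, ∑ y, S α x y * S α' x y := Fintype.sum_prod_type _
      _ = if α = α' then (1:ℝ) else 0 := hortho α α'
  have h1 : Cm * (Gm * Cmᵀ) = 1 := by
    ext α α'
    rw [Matrix.mul_apply, Matrix.one_apply, ← hOrth2 α α']
    refine Finset.sum_congr rfl fun β _ => ?_
    rw [Matrix.mul_apply, Finset.mul_sum]
    refine Finset.sum_congr rfl fun γ _ => ?_
    simp only [hCm, hGm, Matrix.of_apply, Matrix.transpose_apply]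
    ring
  have h2 : (Gm * Cmᵀ) * Cm = 1 := (Matrix.mul_eq_one_comm_of_equiv e).mp h1
  -- expansion of the B family in terms of S
  have h3 : ∀ (β : Idx n) (x y : Fin n),
      Bf β x y = ∑ α, (∑ γ : Idx n, Gm β γ * Cf S α γ) * S α x y := by
    intro β x y
    have c1 : (∑ α, (∑ γ : Idx n, Gm β γ * Cf S α γ) * S α x y)
        = ∑ α, ∑ δ : Idx n, (∑ γ : Idx n, Gm β γ * Cf S α γ) * (Cf S α δ * Bf δ x y) := by
      refine Finset.sum_congr rfl fun α _ => ?_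
      rw [← Finset.mul_sum, ← decomp hn S hsymm htr α x y]
    rw [c1, Finset.sum_comm]
    have c2 : ∀ δ : Idx n, (∑ α, (∑ γ : Idx n, Gm β γ * Cf S α γ) * (Cf S α δ * Bf δ x y))
        = (((Gm * Cmᵀ) * Cm) β δ) * Bf δ x y := by
      intro δ
      rw [Matrix.mul_apply, Finset.sum_mul]
      refine Finset.sum_congr rfl fun α _ => ?_
      rw [Matrix.mul_apply]
      simp only [hCm, hGm, Matrix.of_apply, Matrix.transpose_apply]
      ring
    rw [Finset.sum_congr rfl fun δ _ => c2 δ, h2]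
    simp [Matrix.one_apply, ite_mul]
  -- the specific pair index
  have hbalt : (b:ℕ) < (a:ℕ) := hba
  set β₀ : Idx n := Sum.inl ⟨a, ⟨(b:ℕ), hba⟩⟩ with hβ₀
  have hB0 : ∀ x y : Fin n, Bf β₀ x y
      = (if x = a ∧ y = b then (1:ℝ) else 0) + (if x = b ∧ y = a then 1 else 0) := by
    intro x y
    simp only [hβ₀, Bf, Fin.val_eq_val]
  have hG0 : ∀ γ : Idx n, Gm β₀ γ = Bf γ a b + Bf γ b a := by
    intro γ
    simp only [hGm, Matrix.of_apply]
    calc (∑ x, ∑ y, Bf β₀ x y * Bf γ x y)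
        = ∑ x, ∑ y, ((if x = a ∧ y = b then (1:ℝ) else 0) * Bf γ x y
            + (if x = b ∧ y = a then (1:ℝ) else 0) * Bf γ x y) := by
          refine Finset.sum_congr rfl fun x _ => Finset.sum_congr rfl fun y _ => ?_
          rw [hB0, add_mul]
      _ = (∑ x, ∑ y, (if x = a ∧ y = b then (1:ℝ) else 0) * Bf γ x y)
            + ∑ x, ∑ y, (if x = b ∧ y = a then (1:ℝ) else 0) * Bf γ x y := by
          rw [← Finset.sum_add_distrib]
          exact Finset.sum_congr rfl fun x _ => Finset.sum_add_distrib
      _ = Bf γ a b + Bf γ b a := by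
          rw [sum_double_ite a b (fun x y => Bf γ x y), sum_double_ite b a (fun x y => Bf γ x y)]
  have hrow : ∀ α, (∑ γ : Idx n, Gm β₀ γ * Cf S α γ) = 2 * S α a b := by
    intro α
    calc (∑ γ : Idx n, Gm β₀ γ * Cf S α γ)
        = ∑ γ : Idx n, (Cf S α γ * Bf γ a b + Cf S α γ * Bf γ b a) := by
          refine Finset.sum_congr rfl fun γ _ => ?_
          rw [hG0]; ring
      _ = (∑ γ : Idx n, Cf S α γ * Bf γ a b) + ∑ γ : Idx n, Cf S α γ * Bf γ b a :=
          Finset.sum_add_distrib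
      _ = S α a b + S α b a := by
          rw [← decomp hn S hsymm htr α a b, ← decomp hn S hsymm htr α b a]
      _ = 2 * S α a b := by rw [(hsymm α).apply a b]; ring
  have hfin := h3 β₀ k l
  rw [hB0 k l] at hfin
  rw [hfin]
  refine Finset.sum_congr rfl fun α _ => ?_
  rw [hrow]

open Finset in
/-- For the eigenvalues `λ₁ ≤ … ≤ λ_N` of the curvature operator of the second kind,
any `2 ≤ p ≤ n` and any orthonormal basis, the partial Ricci sum satisfies
`∑_{i=1}^p Ric(eᵢ,eᵢ) ≥ 2(λ₁+…+λ_m) + (p(n-1)-2m)λ_{m+1}` with `m = ⌊p(n-1)/2⌋`.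
In particular, if the operator is `(p(n-1)/2)`-nonnegative then `∑_{i=1}^p Ric(eᵢ,eᵢ) ≥ 0`. -/
theorem partial_ricci_sum_lower_bound
    (n p N : ℕ) (hp : 2 ≤ p) (hpn : p ≤ n) (hN : N = (n - 1) * (n + 2) / 2)
    (R : Fin n → Fin n → Fin n → Fin n → ℝ)
    (hskew : ∀ i j k l, R i j k l = - R j i k l)
    (hpair : ∀ i j k l, R i j k l = R k l i j)
    (hbianchi : ∀ i j k l, R i j k l + R j k i l + R k i j l = 0)
    (lam : Fin N → ℝ) (hmono : Monotone lam)
    (S : Fin N → Matrix (Fin n) (Fin n) ℝ)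
    (hsymm : ∀ α, (S α).IsSymm) (htr : ∀ α, (S α).trace = 0)
    (hortho : ∀ α β, (∑ i, ∑ j, S α i j * S β i j) = if α = β then (1 : ℝ) else 0)
    (heig : ∀ α i j,
      (∑ k, ∑ l, R i k l j * S α k l)
        - (∑ m, ∑ k, ∑ l, R m k l m * S α k l) / n * (if i = j then 1 else 0)
      = lam α * S α i j)
    (hm : p * (n - 1) / 2 < N) :
    (2 * (∑ α ∈ univ.filter (fun α : Fin N => (α : ℕ) < p * (n - 1) / 2), lam α)
        + ((p : ℝ) * ((n : ℝ) - 1) - 2 * (p * (n - 1) / 2 : ℕ)) * lam ⟨p * (n - 1) / 2, hm⟩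
      ≤ ∑ i ∈ univ.filter (fun i : Fin n => (i : ℕ) < p), ∑ j, R i j i j)
    ∧ ((0 ≤ (∑ α ∈ univ.filter (fun α : Fin N => (α : ℕ) < p * (n - 1) / 2), lam α)
          + ((p : ℝ) * ((n : ℝ) - 1) / 2 - (p * (n - 1) / 2 : ℕ)) * lam ⟨p * (n - 1) / 2, hm⟩)
        → 0 ≤ ∑ i ∈ univ.filter (fun i : Fin n => (i : ℕ) < p), ∑ j, R i j i j) := by
  classical
  have hn2 : 2 ≤ n := le_trans hp hpn
  have hn1 : (1:ℕ) ≤ n := by omega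
  -- basic curvature identities
  have hR0 : ∀ i k l, R i i k l = 0 := by
    intro i k l; have := hskew i i k l; linarith
  -- Parseval
  have hpars : ∀ a b : Fin n, a ≠ b → (∑ α, 2 * S α a b * S α a b) = 1 := by
    intro a b hab
    have hk := key_expansion hn2 hN S hsymm htr hortho hab a b
    rw [← hk, if_pos ⟨rfl, rfl⟩, if_neg (by rintro ⟨h1, -⟩; exact hab h1)]
    norm_num
  -- pointwise eigen-identity for R a b a b
  have hstar : ∀ a b : Fin n, a ≠ b →
      R a b a b = ∑ α, lam α * (2 * S α a b * S α a b) := by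
    intro a b hab
    have hkey := key_expansion hn2 hN S hsymm htr hortho hab
    have hleft : (∑ k, ∑ l, R a k l b * ((if k = a ∧ l = b then (1:ℝ) else 0)
        + (if k = b ∧ l = a then 1 else 0))) = R a b a b := by
      have hma : ∀ k l : Fin n, R a k l b * ((if k = a ∧ l = b then (1:ℝ) else 0)
          + (if k = b ∧ l = a then 1 else 0))
          = R a k l b * (if k = a ∧ l = b then (1:ℝ) else 0)
            + R a k l b * (if k = b ∧ l = a then 1 else 0) := fun k l => mul_add _ _ _
      rw [Finset.sum_congr rfl fun k _ => Finset.sum_congr rfl fun l _ => hma k l]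
      rw [Finset.sum_congr rfl fun k _ => Finset.sum_add_distrib, Finset.sum_add_distrib]
      rw [sum_double_ite' a b (fun k l => R a k l b),
        sum_double_ite' b a (fun k l => R a k l b)]
      rw [hR0 a b b, zero_add]
    have hright : (∑ k, ∑ l, R a k l b * (∑ α, 2 * S α a b * S α k l))
        = ∑ α, lam α * (2 * S α a b * S α a b) := by
      calc (∑ k, ∑ l, R a k l b * (∑ α, 2 * S α a b * S α k l))
          = ∑ k, ∑ l, ∑ α, 2 * S α a b * (R a k l b * S α k l) := by
            refine Finset.sum_congr rfl fun k _ => Finset.sum_congr rfl fun l _ => ?_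
            rw [Finset.mul_sum]
            exact Finset.sum_congr rfl fun α _ => by ring
        _ = ∑ k, ∑ α, ∑ l, 2 * S α a b * (R a k l b * S α k l) :=
            Finset.sum_congr rfl fun k _ => Finset.sum_comm
        _ = ∑ α, ∑ k, ∑ l, 2 * S α a b * (R a k l b * S α k l) := Finset.sum_comm
        _ = ∑ α, 2 * S α a b * (∑ k, ∑ l, R a k l b * S α k l) := by
            refine Finset.sum_congr rfl fun α _ => ?_
            rw [Finset.mul_sum]
            exact Finset.sum_congr rfl fun k _ => by rw [Finset.mul_sum]
        _ = ∑ α, lam α * (2 * S α a b * S α a b) := by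
            refine Finset.sum_congr rfl fun α _ => ?_
            have he := heig α a b
            rw [if_neg hab, mul_zero, sub_zero] at he
            rw [he]; ring
    calc R a b a b
        = ∑ k, ∑ l, R a k l b * ((if k = a ∧ l = b then (1:ℝ) else 0)
            + (if k = b ∧ l = a then 1 else 0)) := hleft.symm
      _ = ∑ k, ∑ l, R a k l b * (∑ α, 2 * S α a b * S α k l) :=
          Finset.sum_congr rfl fun k _ => Finset.sum_congr rfl fun l _ => by rw [hkey k l]
      _ = ∑ α, lam α * (2 * S α a b * S α a b) := hright
  -- setup
  set I : Finset (Fin n) := univ.filter (fun i : Fin n => (i:ℕ) < p) with hI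
  set q : Fin N → ℝ :=
    fun α => ∑ i ∈ I, ∑ j, (if j = i then (0:ℝ) else 2 * S α i j * S α i j) with hq
  have hRic : (∑ i ∈ I, ∑ j, R i j i j) = ∑ α, lam α * q α := by
    calc (∑ i ∈ I, ∑ j, R i j i j)
        = ∑ i ∈ I, ∑ j, ∑ α, (if j = i then (0:ℝ)
            else lam α * (2 * S α i j * S α i j)) := by
          refine Finset.sum_congr rfl fun i _ => Finset.sum_congr rfl fun j _ => ?_
          by_cases h : j = i
          · rw [h]
            simp [hR0 i i i]
          · rw [Finset.sum_congr rfl fun α (_ : α ∈ univ) => if_neg h]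
            exact hstar i j (Ne.symm h)
      _ = ∑ i ∈ I, ∑ α, ∑ j, (if j = i then (0:ℝ)
            else lam α * (2 * S α i j * S α i j)) :=
          Finset.sum_congr rfl fun i _ => Finset.sum_comm
      _ = ∑ α, ∑ i ∈ I, ∑ j, (if j = i then (0:ℝ)
            else lam α * (2 * S α i j * S α i j)) := Finset.sum_comm
      _ = ∑ α, lam α * q α := by
          refine Finset.sum_congr rfl fun α _ => ?_
          rw [hq, Finset.mul_sum]
          refine Finset.sum_congr rfl fun i _ => ?_
          rw [Finset.mul_sum]
          refine Finset.sum_congr rfl fun j _ => ?_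
          by_cases h : j = i
          · simp [h]
          · simp only [if_neg h]
  have hq0 : ∀ α, 0 ≤ q α := by
    intro α
    refine Finset.sum_nonneg fun i _ => Finset.sum_nonneg fun j _ => ?_
    by_cases h : j = i
    · simp [h]
    · rw [if_neg h]
      have := mul_self_nonneg (S α i j)
      nlinarith
  have hq2 : ∀ α, q α ≤ 2 := by
    intro α
    have s1 : q α ≤ ∑ i ∈ I, ∑ j, 2 * S α i j * S α i j := by
      refine Finset.sum_le_sum fun i _ => Finset.sum_le_sum fun j _ => ?_
      by_cases h : j = i
      · rw [if_pos h]
        have := mul_self_nonneg (S α i j); nlinarith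
      · rw [if_neg h]
    have s2 : (∑ i ∈ I, ∑ j, 2 * S α i j * S α i j)
        ≤ ∑ i, ∑ j, 2 * S α i j * S α i j := by
      refine Finset.sum_le_sum_of_subset_of_nonneg (Finset.filter_subset _ _)
        fun i _ _ => Finset.sum_nonneg fun j _ => ?_
      have := mul_self_nonneg (S α i j); nlinarith
    have s3 : (∑ i, ∑ j, 2 * S α i j * S α i j) = 2 := by
      have : (∑ i, ∑ j, 2 * S α i j * S α i j) = 2 * ∑ i, ∑ j, S α i j * S α i j := by
        rw [Finset.mul_sum]
        refine Finset.sum_congr rfl fun i _ => ?_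
        rw [Finset.mul_sum]
        exact Finset.sum_congr rfl fun j _ => by ring
      rw [this, hortho α α, if_pos rfl]
      norm_num
    linarith
  have hqsum : (∑ α, q α) = (p:ℝ) * ((n:ℝ) - 1) := by
    calc (∑ α, q α)
        = ∑ i ∈ I, ∑ α, ∑ j, (if j = i then (0:ℝ) else 2 * S α i j * S α i j) :=
          Finset.sum_comm
      _ = ∑ i ∈ I, ∑ j, ∑ α, (if j = i then (0:ℝ) else 2 * S α i j * S α i j) :=
          Finset.sum_congr rfl fun i _ => Finset.sum_comm
      _ = ∑ i ∈ I, ∑ j, (if j = i then (0:ℝ) else 1) := by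
          refine Finset.sum_congr rfl fun i _ => Finset.sum_congr rfl fun j _ => ?_
          by_cases h : j = i
          · simp [h]
          · rw [Finset.sum_congr rfl fun α (_ : α ∈ univ) => if_neg h, if_neg h]
            exact hpars i j (Ne.symm h)
      _ = ∑ i ∈ I, ((n:ℝ) - 1) := by
          refine Finset.sum_congr rfl fun i _ => ?_
          have e1 : ∀ j : Fin n, (if j = i then (0:ℝ) else 1)
              = 1 - (if j = i then (1:ℝ) else 0) := by
            intro j; by_cases h : j = i <;> simp [h]
          rw [Finset.sum_congr rfl fun j _ => e1 j, Finset.sum_sub_distrib,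
            Finset.sum_ite_eq' univ i (fun _ => (1:ℝ)), if_pos (Finset.mem_univ i),
            Finset.sum_const, Finset.card_univ, Fintype.card_fin]
          simp
      _ = (p:ℝ) * ((n:ℝ) - 1) := by
          rw [Finset.sum_const, hI, card_filter_lt p hpn, nsmul_eq_mul]
  -- the weight function t
  set mm : ℕ := p * (n - 1) / 2 with hmm
  set mIdx : Fin N := ⟨mm, hm⟩ with hmIdx
  have hW1 : 2 * mm ≤ p * (n-1) := by omega
  have hW2 : p * (n-1) ≤ 2 * mm + 1 := by omega
  have hWcast : ((p * (n-1) : ℕ) : ℝ) = (p:ℝ) * ((n:ℝ) - 1) := by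
    rw [Nat.cast_mul, Nat.cast_sub hn1, Nat.cast_one]
  set t : Fin N → ℝ := fun α => (if (α:ℕ) < mm then (2:ℝ) else 0)
      + (if α = mIdx then ((p * (n-1) : ℕ) : ℝ) - 2*(mm:ℝ) else 0) with htdef
  have htsum : (∑ α, t α) = (p:ℝ) * ((n:ℝ) - 1) := by
    rw [htdef]
    rw [Finset.sum_add_distrib]
    have p1 : (∑ α : Fin N, if (α:ℕ) < mm then (2:ℝ) else 0) = 2 * (mm:ℝ) := by
      rw [← Finset.sum_filter, Finset.sum_const, card_filter_lt mm (le_of_lt hm),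
        nsmul_eq_mul]
      ring
    have p2 : (∑ α : Fin N, if α = mIdx then ((p * (n-1) : ℕ) : ℝ) - 2*(mm:ℝ) else 0)
        = ((p * (n-1) : ℕ) : ℝ) - 2*(mm:ℝ) := by
      rw [Finset.sum_ite_eq' univ mIdx, if_pos (Finset.mem_univ mIdx)]
    rw [p1, p2, hWcast]
    ring
  have htlam : (∑ α, t α * lam α)
      = 2 * (∑ α ∈ univ.filter (fun α : Fin N => (α:ℕ) < mm), lam α)
        + (((p * (n-1) : ℕ) : ℝ) - 2*(mm:ℝ)) * lam mIdx := by
    rw [htdef]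
    have e1 : ∀ α : Fin N, ((if (α:ℕ) < mm then (2:ℝ) else 0)
        + (if α = mIdx then ((p * (n-1) : ℕ) : ℝ) - 2*(mm:ℝ) else 0)) * lam α
        = (if (α:ℕ) < mm then 2 * lam α else 0)
          + (if α = mIdx then (((p * (n-1) : ℕ) : ℝ) - 2*(mm:ℝ)) * lam α else 0) := by
      intro α
      by_cases h1 : (α:ℕ) < mm <;> by_cases h2 : α = mIdx <;> simp only [h1, ↓reduceIte] <;> simp [h2] <;> ring
    rw [Finset.sum_congr rfl fun α _ => e1 α, Finset.sum_add_distrib]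
    congr 1
    · rw [← Finset.sum_filter, Finset.mul_sum]
    · rw [Finset.sum_ite_eq' univ mIdx, if_pos (Finset.mem_univ mIdx)]
  have hkey_ineq : (∑ α, t α * lam α) ≤ ∑ α, lam α * q α := by
    have hterm : ∀ α : Fin N, 0 ≤ (q α - t α) * (lam α - lam mIdx) := by
      intro α
      rcases lt_trichotomy ((α:ℕ)) mm with h | h | h
      · have ht2 : t α = 2 := by
          rw [htdef]
          have hne : α ≠ mIdx := by
            intro e; rw [e] at h; simp [hmIdx] at h
          simp [h, hne]
        have hlt : lam α ≤ lam mIdx := hmono (by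
          show α ≤ mIdx
          rw [Fin.le_def]
          simp [hmIdx]
          omega)
        have := hq2 α
        nlinarith
      · have : α = mIdx := by
          rw [hmIdx]; exact Fin.ext (by simp [hmIdx, h])
        rw [this]
        simp
      · have ht0 : t α = 0 := by
          rw [htdef]
          have hne : α ≠ mIdx := by
            intro e; rw [e] at h; simp [hmIdx] at h
          simp [hne]
          omega
        have hlt : lam mIdx ≤ lam α := hmono (by
          show mIdx ≤ α
          rw [Fin.le_def]
          simp [hmIdx]
          omega)
        have := hq0 α
        nlinarith
    have hsum0 : 0 ≤ ∑ α, (q α - t α) * (lam α - lam mIdx) :=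
      Finset.sum_nonneg fun α _ => hterm α
    have hexpand : (∑ α, (q α - t α) * (lam α - lam mIdx))
        = (∑ α, lam α * q α) - (∑ α, t α * lam α)
          - lam mIdx * ((∑ α, q α) - (∑ α, t α)) := by
      have e1 : ∀ α : Fin N, (q α - t α) * (lam α - lam mIdx)
          = (lam α * q α - t α * lam α) - (lam mIdx * q α - lam mIdx * t α) := by
        intro α; ring
      rw [Finset.sum_congr rfl fun α _ => e1 α, Finset.sum_sub_distrib,
        Finset.sum_sub_distrib, Finset.sum_sub_distrib, ← Finset.mul_sum, ← Finset.mul_sum]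
      ring
    rw [hexpand, hqsum, htsum] at hsum0
    linarith
  -- conclusion
  have part1 : 2 * (∑ α ∈ univ.filter (fun α : Fin N => (α:ℕ) < mm), lam α)
      + ((p : ℝ) * ((n : ℝ) - 1) - 2 * (mm:ℕ)) * lam mIdx
      ≤ ∑ i ∈ I, ∑ j, R i j i j := by
    rw [hRic]
    calc 2 * (∑ α ∈ univ.filter (fun α : Fin N => (α:ℕ) < mm), lam α)
        + ((p : ℝ) * ((n : ℝ) - 1) - 2 * (mm:ℕ)) * lam mIdx
        = ∑ α, t α * lam α := by rw [htlam, hWcast]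
      _ ≤ ∑ α, lam α * q α := hkey_ineq
  refine ⟨part1, fun h0 => ?_⟩
  have h2 : 0 ≤ 2 * ((∑ α ∈ univ.filter (fun α : Fin N => (α:ℕ) < mm), lam α)
      + ((p : ℝ) * ((n : ℝ) - 1) / 2 - (mm:ℕ)) * lam mIdx) := by linarith
  calc (0:ℝ) ≤ 2 * (∑ α ∈ univ.filter (fun α : Fin N => (α:ℕ) < mm), lam α)
      + ((p : ℝ) * ((n : ℝ) - 1) - 2 * (mm:ℕ)) * lam mIdx := by linarith
    _ ≤ ∑ i ∈ I, ∑ j, R i j i j := part1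
end

section
/- For any algebraic curvature tensor R and p-form ω on an n-dimensional Euclidean vector space, with ω^{S²₀} = Σ_α (S_α ω)⊗S_α over an orthonormal basis {S_α} of trace-free symmetric tensors, one has g(R̄(ω^{S²₀}), ω^{S²₀}) = g(𝓡(ω^{S²₀}), ω^{S²₀}), i.e., the quadratic form only depends on the curvature operator of the second kind 𝓡 = pr_{S²₀} ∘ R̄|_{S²₀}. -/
/-!
Subtracting the trace part of `R̄(S_α)` changes `R̄(S_α)` by a multiple of the identity, and the
identity pairs to zero with every trace-free `S_β`; so each coefficient `g(R̄(S_α), S_β)` of the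
quadratic form already equals `g(𝓡(S_α), S_β)`.
-/

open Finset

theorem Matrix.sum_sum_ite_eq_mul_eq_trace {ι R : Type*} [Fintype ι] [DecidableEq ι]
    [NonAssocSemiring R] (B : Matrix ι ι R) :
    ∑ i, ∑ j, (if i = j then 1 else 0) * B i j = B.trace := by
  simp only [ite_mul, one_mul, zero_mul, sum_ite_eq, mem_univ, if_true]
  rfl

theorem Matrix.sum_sum_sub_mul_ite_eq_mul_of_trace_eq_zero {ι R : Type*} [Fintype ι]
    [DecidableEq ι] [CommRing R] (A B : Matrix ι ι R) (c : R) (hB : B.trace = 0) :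
    ∑ i, ∑ j, (A i j - c * (if i = j then 1 else 0)) * B i j = ∑ i, ∑ j, A i j * B i j := by
  calc ∑ i, ∑ j, (A i j - c * (if i = j then 1 else 0)) * B i j
      = ∑ i, ∑ j, A i j * B i j - c * ∑ i, ∑ j, (if i = j then 1 else 0) * B i j := by
        simp only [sub_mul, sum_sub_distrib, mul_sum, mul_assoc]
    _ = ∑ i, ∑ j, A i j * B i j := by
        rw [Matrix.sum_sum_ite_eq_mul_eq_trace, hB, mul_zero, sub_zero]

theorem quadratic_form_depends_only_on_second_kind_general
    (n p N : ℕ)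
    (R : Fin n → Fin n → Fin n → Fin n → ℝ)
    (S : Fin N → Matrix (Fin n) (Fin n) ℝ)
    (htr : ∀ α, (S α).trace = 0)
    (Sω : Fin N → (Fin p → Fin n) → ℝ) :
    (∑ α, ∑ β, (∑ I : Fin p → Fin n, Sω α I * Sω β I) *
        (∑ i, ∑ j, (∑ k, ∑ l, R i k l j * S α k l) * S β i j))
      = ∑ α, ∑ β, (∑ I : Fin p → Fin n, Sω α I * Sω β I) *
          (∑ i, ∑ j, ((∑ k, ∑ l, R i k l j * S α k l)
              - (∑ m, ∑ k, ∑ l, R m k l m * S α k l) / n * (if i = j then 1 else 0))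
            * S β i j) := by
  refine sum_congr rfl fun α _ => sum_congr rfl fun β _ => ?_
  rw [Matrix.sum_sum_sub_mul_ite_eq_mul_of_trace_eq_zero
    (fun i j => ∑ k, ∑ l, R i k l j * S α k l) (S β) _ (htr β)]

/-- `g(R̄(ω^{S²₀}), ω^{S²₀}) = g(𝓡(ω^{S²₀}), ω^{S²₀})`: the quadratic form on
`ω^{S²₀} = ∑_α (S_α ω) ⊗ S_α` only depends on the curvature operator of the
second kind `𝓡 = pr_{S²₀} ∘ R̄|_{S²₀}`. -/
theorem quadratic_form_depends_only_on_second_kind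
    (n p N : ℕ) (hN : N = (n - 1) * (n + 2) / 2)
    (R : Fin n → Fin n → Fin n → Fin n → ℝ)
    (hskew : ∀ i j k l, R i j k l = - R j i k l)
    (hpair : ∀ i j k l, R i j k l = R k l i j)
    (hbianchi : ∀ i j k l, R i j k l + R j k i l + R k i j l = 0)
    (S : Fin N → Matrix (Fin n) (Fin n) ℝ)
    (hsymm : ∀ α, (S α).IsSymm) (htr : ∀ α, (S α).trace = 0)
    (hortho : ∀ α β, (∑ i, ∑ j, S α i j * S β i j) = if α = β then (1 : ℝ) else 0)
    (ω : (Fin p → Fin n) → ℝ)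
    (hω : ∀ (I : Fin p → Fin n) (a b : Fin p), a ≠ b →
      ω (I ∘ Equiv.swap a b) = - ω I)
    (Sω : Fin N → (Fin p → Fin n) → ℝ)
    (hSω : ∀ α I, Sω α I = ∑ k, ∑ j, S α j (I k) * ω (Function.update I k j)) :
    (∑ α, ∑ β, (∑ I : Fin p → Fin n, Sω α I * Sω β I) *
        (∑ i, ∑ j, (∑ k, ∑ l, R i k l j * S α k l) * S β i j))
      = ∑ α, ∑ β, (∑ I : Fin p → Fin n, Sω α I * Sω β I) *
          (∑ i, ∑ j, ((∑ k, ∑ l, R i k l j * S α k l)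
              - (∑ m, ∑ k, ∑ l, R m k l m * S α k l) / n * (if i = j then 1 else 0))
            * S β i j) :=
  quadratic_form_depends_only_on_second_kind_general n p N R S htr Sω
end
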